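/- arXiv:1409.6255 — 4 statements merged into one kernel-verified Lean document; each statement's English description precedes it below -/
import Mathlib

section
/- Let φ : ℝ → ℝ be right-continuous and nondecreasing and let ζ = (ζ₁,…,ζₙ) ∈ 𝒵. Then for every càdlàg submartingale X = (X_t)_{t≤T} with deterministic initial value X_0 = X₀ a.s. (on any filtered probability space), E[φ(X̄_T)] ≤ UB(X, φ, ζ), where both sides take values in (−∞, +∞] (the left-hand side is bounded below by φ(X₀) since X̄_T ≥ X₀). -/
open MeasureTheory ProbabilityTheory Set Filter
open scoped ENNReal NNReal Classical

noncomputable section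

/-- Running maximum of a path over the time interval `[0, t]`. -/
def runMax (f : ℝ → ℝ) (t : ℝ) : ℝ := sSup (f '' Set.Icc 0 t)

/-- Positive part `x⁺ = max (x, 0)`. -/
def ppart (x : ℝ) : ℝ := max x 0

/-- A real function is càdlàg: right-continuous with left limits. -/
def IsCadlag (f : ℝ → ℝ) : Prop :=
  (∀ t, ContinuousWithinAt f (Set.Ici t) t) ∧
  (∀ t, ∃ l : ℝ, Filter.Tendsto f (nhdsWithin t (Set.Iio t)) (nhds l))

/-- The function `λᵢ^{ζ,m}(x)` built from the boundaries `ζ`. -/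
def lam (n : ℕ) (ζ : ℕ → ℝ → ℝ) (m : ℝ) (i : ℕ) (x : ℝ) : ℝ :=
  ppart (x - ζ i m) / (m - ζ i m) -
    (if i < n then ppart (x - ζ (i + 1) m) / (m - ζ (i + 1) m) else 0)

/-- The integrand `∑_{i=1}^n E[λᵢ^{ζ,m}(X_{tᵢ})]` of the upper bound `UB`. -/
def UBsum {Ω : Type} [MeasurableSpace Ω] (μ : Measure Ω) (X : ℝ → Ω → ℝ)
    (t : ℕ → ℝ) (n : ℕ) (ζ : ℕ → ℝ → ℝ) (m : ℝ) : ℝ :=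
  ∑ i ∈ Finset.Icc 1 n, ∫ ω, lam n ζ m i (X (t i) ω) ∂μ

/-- The part `∫_{(X₀,∞)} ∑_{i=1}^n E[λᵢ^{ζ,m}(X_{tᵢ})] dφ(m)` of the upper bound
`UB(X, φ, ζ) = φ(X₀) + UBtail`, as a value in `[0,∞]`; the integral is taken
against the Lebesgue–Stieltjes measure of the nondecreasing right-continuous `φ`. -/
def UBtail {Ω : Type} [MeasurableSpace Ω] (μ : Measure Ω) (X : ℝ → Ω → ℝ)
    (φ : StieltjesFunction ℝ) (x₀ : ℝ) (t : ℕ → ℝ) (n : ℕ) (ζ : ℕ → ℝ → ℝ) : ℝ≥0∞ :=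
  ∫⁻ m in Set.Ioi x₀, ENNReal.ofReal (UBsum μ X t n ζ m) ∂φ.measure

/-- Membership in the class `𝒵`: each `ζᵢ`, `1 ≤ i ≤ n`, is right-continuous on `(X₀,∞)`
and `ζ₁(m) ≤ … ≤ ζₙ(m) < m` for every `m > X₀`. -/
def memZ (x₀ : ℝ) (n : ℕ) (ζ : ℕ → ℝ → ℝ) : Prop :=
  (∀ i ∈ Finset.Icc 1 n, ∀ m ∈ Set.Ioi x₀, ContinuousWithinAt (ζ i) (Set.Ici m) m) ∧
  (∀ i, 1 ≤ i → i < n → ∀ m ∈ Set.Ioi x₀, ζ i m ≤ ζ (i + 1) m) ∧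
  (∀ m ∈ Set.Ioi x₀, ζ n m < m)

/-- Membership in the class `𝒵^cts`: member of `𝒵` with continuous `ζᵢ` on `(X₀,∞)`. -/
def memZcts (x₀ : ℝ) (n : ℕ) (ζ : ℕ → ℝ → ℝ) : Prop :=
  memZ x₀ n ζ ∧ ∀ i ∈ Finset.Icc 1 n, ContinuousOn (ζ i) (Set.Ioi x₀)

/-- Membership in the class `𝒵̃`: member of `𝒵^cts`, strictly increasing boundaries,
`liminf_{m→∞} ζ₁(m)/(αm) ≥ 1` for some `α > 0`, and all boundaries coincide near `X₀`. -/
def memZtilde (x₀ : ℝ) (n : ℕ) (ζ : ℕ → ℝ → ℝ) : Prop :=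
  memZcts x₀ n ζ ∧
  (∀ i ∈ Finset.Icc 1 n, StrictMonoOn (ζ i) (Set.Ioi x₀)) ∧
  (∃ α > (0 : ℝ), 1 ≤ Filter.liminf (fun m => ζ 1 m / (α * m)) Filter.atTop) ∧
  (∃ ε > (0 : ℝ), ∀ i ∈ Finset.Icc 1 n, ∀ m ∈ Set.Ioo x₀ (x₀ + ε), ζ i m = ζ 1 m)

/-- Condition (I), the integrability condition on the pair `(φ, ζ)`. -/
def CondI (φ : ℝ → ℝ) (ζ : ℕ → ℝ → ℝ) : Prop :=
  ∃ α > (0 : ℝ), 1 ≤ Filter.liminf (fun m => ζ 1 m / (α * m)) Filter.atTop ∧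
    ∃ γ : ℝ, γ < 1 / (1 - α) ∧
      Filter.limsup (fun m => φ m / m ^ γ) Filter.atTop = 0

/-!
Fix a level `m > X₀` and put `fᵢ(x) = (x - ζᵢ(m))⁺ / (m - ζᵢ(m))`, so that
`λᵢ^{ζ,m} = fᵢ - fᵢ₊₁` for `i < n`. Each `fᵢ(X)` is a submartingale, `fᵢ ≥ 1 - δ / (m - ζₙ(m))`
on `[m - δ, ∞)`, and `fᵢ₊₁ ≤ fᵢ` on `(-∞, m]`. Hold `fᵢ(X)` on `(tᵢ₋₁, tᵢ]` until the first
time the path reaches `m - δ`, and switch from `fᵢ` to `fᵢ₊₁` at `tᵢ` only on paths that have not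
reached it yet; optional stopping then gives
`(1 - δ / (m - ζₙ(m))) P(X reaches m - δ by time T) ≤ ∑ᵢ E[λᵢ^{ζ,m}(X_{tᵢ})]`,
and `δ → 0` bounds `P(X̄_T ≥ m)`. Since `φ(X̄_T) - φ(X₀)` is the `dφ`-mass of `(X₀, X̄_T]`,
integrating over `m` (Tonelli) gives the theorem. By right-continuity the running maximum
may be taken over the countably many rational times and the `tᵢ`, which keeps every event
measurable and lets the stopping argument run over finite sets of times.
-/

def normCall (K m x : ℝ) : ℝ := ppart (x - K) / (m - K)

lemma lam_eq (n : ℕ) (ζ : ℕ → ℝ → ℝ) (m : ℝ) (i : ℕ) (x : ℝ) :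
    lam n ζ m i x = normCall (ζ i m) m x - if i < n then normCall (ζ (i + 1) m) m x else 0 :=
  rfl

lemma normCall_nonneg {K m : ℝ} (hK : K ≤ m) (x : ℝ) : 0 ≤ normCall K m x :=
  div_nonneg (le_max_right _ _) (sub_nonneg.2 hK)

lemma one_sub_div_le_normCall {K m c δ x : ℝ} (hc : 0 < c) (hcK : c ≤ m - K) (hδ : 0 ≤ δ)
    (hx : m - δ ≤ x) : 1 - δ / c ≤ normCall K m x := by
  have hmK : 0 < m - K := hc.trans_le hcK
  calc 1 - δ / c ≤ 1 - δ / (m - K) := by gcongr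
    _ = (m - δ - K) / (m - K) := by field_simp; ring
    _ ≤ normCall K m x := by
      unfold normCall ppart
      gcongr
      exact le_max_of_le_left (by linarith)

lemma normCall_le_normCall {K K' m x : ℝ} (hKK' : K ≤ K') (hK' : K' < m) (hx : x ≤ m) :
    normCall K' m x ≤ normCall K m x := by
  rcases le_or_gt x K' with hxK' | hK'x
  · rw [normCall, ppart, max_eq_right (by linarith), zero_div]
    exact normCall_nonneg (hKK'.trans hK'.le) x
  · rw [normCall, normCall, ppart, ppart, max_eq_left (by linarith), max_eq_left (by linarith),
      div_le_div_iff₀ (by linarith) (by linarith)]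
    nlinarith

lemma MeasureTheory.Integrable.normCall_comp {Ω : Type*} [MeasurableSpace Ω] {μ : Measure Ω}
    [IsFiniteMeasure μ] {Y : Ω → ℝ} (hY : Integrable Y μ) (K m : ℝ) :
    Integrable (fun ω => normCall K m (Y ω)) μ :=
  (hY.sub (integrable_const K)).pos_part.div_const (m - K)

lemma MeasureTheory.Submartingale.normCall_comp {Ω ι : Type*} [Preorder ι] [m0 : MeasurableSpace Ω]
    {μ : Measure Ω} [IsFiniteMeasure μ] {ℱ : Filtration ι m0} {X : ι → Ω → ℝ}
    (hX : Submartingale X ℱ μ) {K m : ℝ} (hK : K ≤ m) :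
    Submartingale (fun s ω => normCall K m (X s ω)) ℱ μ := by
  have h : (fun s ω => normCall K m (X s ω)) = (m - K)⁻¹ • (X - fun _ _ => K)⁺ := by
    ext s ω
    simp [normCall, ppart, posPart_def, div_eq_inv_mul]
  rw [h]
  exact ((hX.sub_martingale (martingale_const ℱ μ K)).pos).smul_nonneg
    (inv_nonneg.2 (sub_nonneg.2 hK))

def hitEvent {Ω ι : Type*} (X : ι → Ω → ℝ) (S : Set ι) (θ : ℝ) : Set Ω :=
  ⋃ s ∈ S, {ω | θ ≤ X s ω}

lemma hitEvent_union {Ω ι : Type*} (X : ι → Ω → ℝ) (S S' : Set ι) (θ : ℝ) :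
    hitEvent X (S ∪ S') θ = hitEvent X S θ ∪ hitEvent X S' θ :=
  biUnion_union S S' _

section Hitting

variable {Ω ι : Type*} [LinearOrder ι] [m0 : MeasurableSpace Ω] {μ : Measure Ω}
  {ℱ : Filtration ι m0}

lemma measurableSet_hitEvent {X : ι → Ω → ℝ} (hX : StronglyAdapted ℱ X) {S : Set ι}
    (hS : S.Countable) {v : ι} (hSv : ∀ s ∈ S, s ≤ v) (θ : ℝ) :
    MeasurableSet[ℱ v] (hitEvent X S θ) :=
  MeasurableSet.biUnion hS fun s hs =>
    ℱ.mono (hSv s hs) _ ((hX s).measurable measurableSet_Ici)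

-- Doob's maximal inequality, stopping at the first time of `S` whose event occurs.
lemma MeasureTheory.Submartingale.mul_measureReal_biUnion_le_setIntegral [IsFiniteMeasure μ]
    {G : ι → Ω → ℝ} (hG : Submartingale G ℱ μ) {B : ι → Set Ω} {κ : ℝ} {v : ι} (S : Finset ι)
    (hB : ∀ s ∈ S, MeasurableSet[ℱ s] (B s)) (hGB : ∀ s ∈ S, ∀ ω ∈ B s, κ ≤ G s ω)
    (hSv : ∀ s ∈ S, s ≤ v) :
    κ * μ.real (⋃ s ∈ S, B s) ≤ ∫ ω in ⋃ s ∈ S, B s, G v ω ∂μ := by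
  classical
  induction S using Finset.induction_on_max with
  | empty => simp
  | insert a S hlt ih =>
    set U := ⋃ s ∈ S, B s
    have hU : MeasurableSet[ℱ a] U := MeasurableSet.biUnion S.countable_toSet fun s hs =>
      ℱ.mono (hlt s hs).le _ (hB s (Finset.mem_insert_of_mem hs))
    have hnew : MeasurableSet[ℱ a] (B a \ U) := (hB a (Finset.mem_insert_self a S)).diff hU
    have hunion : ⋃ s ∈ insert a S, B s = U ∪ (B a \ U) := by
      rw [Finset.set_biUnion_insert, union_sdiff_self, union_comm]
    rw [hunion, measureReal_union disjoint_sdiff_right (ℱ.le _ _ hnew) (measure_ne_top μ _),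
      setIntegral_union disjoint_sdiff_right (ℱ.le _ _ hnew) (hG.integrable v).integrableOn
        (hG.integrable v).integrableOn, mul_add]
    gcongr ?_ + ?_
    · exact ih (fun s hs => hB s (Finset.mem_insert_of_mem hs))
        (fun s hs => hGB s (Finset.mem_insert_of_mem hs))
        (fun s hs => hSv s (Finset.mem_insert_of_mem hs))
    · calc κ * μ.real (B a \ U) ≤ ∫ ω in B a \ U, G a ω ∂μ := by
            rw [mul_comm, ← smul_eq_mul]
            exact setIntegral_ge_of_const_le (ℱ.le _ _ hnew) (measure_ne_top μ _)
              (fun ω hω => hGB a (Finset.mem_insert_self a S) ω hω.1)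
              (hG.integrable a).integrableOn
        _ ≤ ∫ ω in B a \ U, G v ω ∂μ :=
            hG.setIntegral_le (hSv a (Finset.mem_insert_self a S)) hnew

lemma MeasureTheory.Submartingale.mul_measureReal_biUnion_le_setIntegral_of_countable
    [IsFiniteMeasure μ] {G : ι → Ω → ℝ} (hG : Submartingale G ℱ μ) {B : ι → Set Ω} {κ : ℝ}
    {v : ι} {S : Set ι} (hS : S.Countable) (hB : ∀ s ∈ S, MeasurableSet[ℱ s] (B s))
    (hGB : ∀ s ∈ S, ∀ ω ∈ B s, κ ≤ G s ω) (hSv : ∀ s ∈ S, s ≤ v) :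
    κ * μ.real (⋃ s ∈ S, B s) ≤ ∫ ω in ⋃ s ∈ S, B s, G v ω ∂μ := by
  have := hS.to_subtype
  let U : Finset S → Set Ω := fun F => ⋃ s ∈ F.map (Function.Embedding.subtype _), B s
  have hU : Monotone U := fun F F' hFF' =>
    biUnion_subset_biUnion_left (Finset.coe_subset.2 (Finset.map_subset_map.2 hFF'))
  have hUm : ∀ F, MeasurableSet (U F) := fun F =>
    MeasurableSet.biUnion (Finset.countable_toSet _) fun s hs => by
      obtain ⟨s, -, rfl⟩ := Finset.mem_map.1 hs
      exact ℱ.le _ _ (hB s s.2)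
  have hUnion : ⋃ F, U F = ⋃ s ∈ S, B s := by
    ext ω
    simp only [U, mem_iUnion, Finset.mem_map, Function.Embedding.coe_subtype, exists_prop]
    constructor
    · rintro ⟨F, s, ⟨x, -, rfl⟩, hω⟩
      exact ⟨x, x.2, hω⟩
    · rintro ⟨s, hs, hω⟩
      exact ⟨{⟨s, hs⟩}, s, ⟨⟨s, hs⟩, Finset.mem_singleton_self _, rfl⟩, hω⟩
  have hfin : ∀ F, κ * μ.real (U F) ≤ ∫ ω in U F, G v ω ∂μ := fun F =>
    hG.mul_measureReal_biUnion_le_setIntegral _ (by simpa using fun s hs _ => hB s hs)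
      (by simpa using fun s hs _ => hGB s hs) (by simpa using fun s hs _ => hSv s hs)
  rw [← hUnion]
  refine le_of_tendsto_of_tendsto' ?_
    (tendsto_setIntegral_of_monotone hUm hU (hG.integrable v).integrableOn) hfin
  exact ((ENNReal.tendsto_toReal (measure_ne_top μ _)).comp
    (tendsto_measure_iUnion_atTop hU)).const_mul κ

end Hitting

section Chain

variable {Ω ι : Type*} [LinearOrder ι] [m0 : MeasurableSpace Ω] {μ : Measure Ω}
  [IsFiniteMeasure μ] {ℱ : Filtration ι m0} {X : ι → Ω → ℝ} {θ κ : ℝ} {S : Set ι}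

lemma mul_measureReal_union_hitEvent_add_setIntegral_le (hX : StronglyAdapted ℱ X)
    {G : ι → Ω → ℝ} (hG : Submartingale G ℱ μ) (hGX : ∀ s ω, θ ≤ X s ω → κ ≤ G s ω)
    (hS : S.Countable) {v : ι} (hSv : ∀ s ∈ S, s ≤ v) {A : Set Ω}
    (hA : ∀ s ∈ S, MeasurableSet[ℱ s] A) :
    κ * μ.real (A ∪ hitEvent X S θ) + ∫ ω in (A ∪ hitEvent X S θ)ᶜ, G v ω ∂μ
      ≤ κ * μ.real A + ∫ ω in Aᶜ, G v ω ∂μ := by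
  set H := hitEvent X S θ
  have hB : ∀ s ∈ S, MeasurableSet[ℱ s] ({ω | θ ≤ X s ω} \ A) := fun s hs =>
    ((hX s).measurable measurableSet_Ici).diff (hA s hs)
  have hHA : H \ A = ⋃ s ∈ S, ({ω | θ ≤ X s ω} \ A) := by
    simp_rw [H, hitEvent, iUnion_sdiff]
  have hHAm : MeasurableSet (H \ A) :=
    hHA ▸ MeasurableSet.biUnion hS fun s hs => ℱ.le s _ (hB s hs)
  have hfirst : κ * μ.real (H \ A) ≤ ∫ ω in H \ A, G v ω ∂μ :=
    hHA ▸ hG.mul_measureReal_biUnion_le_setIntegral_of_countable hS hB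
      (fun s _ ω hω => hGX s ω hω.1) hSv
  have hcompl : Aᶜ = (A ∪ H)ᶜ ∪ H \ A := by
    ext ω
    by_cases hω : ω ∈ H <;> simp [hω]
  have hμ : μ.real (A ∪ H) = μ.real A + μ.real (H \ A) := by
    rw [← measureReal_union disjoint_sdiff_right hHAm, union_sdiff_self]
  have hint : ∫ ω in Aᶜ, G v ω ∂μ = ∫ ω in (A ∪ H)ᶜ, G v ω ∂μ + ∫ ω in H \ A, G v ω ∂μ := by
    rw [hcompl]
    exact setIntegral_union (disjoint_left.2 fun ω h₁ h₂ => h₁ (Or.inr h₂.1))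
      hHAm (hG.integrable v).integrableOn (hG.integrable v).integrableOn
  rw [hμ, hint]
  linarith

variable {f : ℕ → ℝ → ℝ} {t : ℕ → ι} {n : ℕ}

lemma mul_measureReal_hitEvent_Iic_add_setIntegral_compl_le (hX : StronglyAdapted ℱ X)
    (hS : S.Countable) (hf : ∀ i ∈ Finset.Icc 1 n, Submartingale (fun s ω => f i (X s ω)) ℱ μ)
    (hfθ : ∀ i ∈ Finset.Icc 1 n, ∀ x, θ ≤ x → κ ≤ f i x)
    (hf_anti : ∀ i ∈ Finset.Ico 1 n, ∀ x < θ, f (i + 1) x ≤ f i x)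
    (ht : ∀ i ∈ Finset.Ico 1 n, t i ≤ t (i + 1)) (htS : ∀ i ∈ Finset.Ico 1 n, t i ∈ S) :
    ∀ i ∈ Finset.Icc 1 n,
      κ * μ.real (hitEvent X (S ∩ Iic (t i)) θ)
          + ∫ ω in (hitEvent X (S ∩ Iic (t i)) θ)ᶜ, f i (X (t i) ω) ∂μ
        ≤ ∑ j ∈ Finset.Icc 1 i, ∫ ω, f j (X (t j) ω) ∂μ
          - ∑ j ∈ Finset.Ico 1 i, ∫ ω, f (j + 1) (X (t j) ω) ∂μ := by
  intro i hi
  obtain ⟨hi1, hin⟩ := Finset.mem_Icc.1 hi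
  induction i, hi1 using Nat.le_induction with
  | base =>
    have h := mul_measureReal_union_hitEvent_add_setIntegral_le (S := S ∩ Iic (t 1)) hX
      (hf 1 hi) (fun s ω h => hfθ 1 hi _ h) (hS.mono inter_subset_left) (fun _ hs => hs.2)
      (A := ∅) (fun _ _ => @MeasurableSet.empty _ (ℱ _))
    simpa using h
  | succ i hi1 ih =>
    have hi : i ∈ Finset.Ico 1 n := Finset.mem_Ico.2 ⟨hi1, hin⟩
    have hi' : i + 1 ∈ Finset.Icc 1 n := Finset.mem_Icc.2 ⟨by omega, hin⟩
    set A := hitEvent X (S ∩ Iic (t i)) θ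
    have hAm : MeasurableSet[ℱ (t i)] A :=
      measurableSet_hitEvent hX (hS.mono inter_subset_left) (fun _ hs => hs.2) θ
    have hsplit : hitEvent X (S ∩ Iic (t (i + 1))) θ
        = A ∪ hitEvent X (S ∩ Ioc (t i) (t (i + 1))) θ := by
      rw [← hitEvent_union, ← inter_union_distrib_left,
        Iic_union_Ioc_eq_Iic (ht i hi)]
    have hG := hf (i + 1) hi'
    have hblock := mul_measureReal_union_hitEvent_add_setIntegral_le
      (S := S ∩ Ioc (t i) (t (i + 1))) hX hG (fun s ω h => hfθ (i + 1) hi' _ h)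
      (hS.mono inter_subset_left) (fun _ hs => hs.2.2) (A := A)
      (fun _ hs => ℱ.mono hs.2.1.le _ hAm)
    have hmono : ∫ ω in A, f (i + 1) (X (t i) ω) ∂μ ≤ ∫ ω in A, f (i + 1) (X (t (i + 1)) ω) ∂μ :=
      hG.setIntegral_le (ht i hi) hAm
    -- off `A` the path has stayed below `θ` up to time `t i`, in particular at `t i ∈ S`
    have hcompl : ∫ ω in Aᶜ, f (i + 1) (X (t i) ω) ∂μ ≤ ∫ ω in Aᶜ, f i (X (t i) ω) ∂μ := by
      refine setIntegral_mono_on (hG.integrable _).integrableOn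
        ((hf i (Finset.mem_Icc.2 ⟨hi1, by omega⟩)).integrable _).integrableOn
        (ℱ.le _ _ hAm).compl fun ω hω => hf_anti i hi _ (not_le.1 fun h => hω ?_)
      exact mem_biUnion ⟨htS i hi, le_rfl⟩ h
    have hsplit₁ := integral_add_compl (ℱ.le _ _ hAm) (hG.integrable (t i))
    have hsplit₂ := integral_add_compl (ℱ.le _ _ hAm) (hG.integrable (t (i + 1)))
    rw [hsplit, Finset.sum_Icc_succ_top (by omega), Finset.sum_Ico_succ_top hi1]
    linarith [ih (Finset.mem_Icc.2 ⟨hi1, by omega⟩) (by omega)]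

lemma mul_measureReal_hitEvent_le (hX : StronglyAdapted ℱ X) (hS : S.Countable) (hn : 1 ≤ n)
    (hf : ∀ i ∈ Finset.Icc 1 n, Submartingale (fun s ω => f i (X s ω)) ℱ μ)
    (hfθ : ∀ i ∈ Finset.Icc 1 n, ∀ x, θ ≤ x → κ ≤ f i x)
    (hf_anti : ∀ i ∈ Finset.Ico 1 n, ∀ x < θ, f (i + 1) x ≤ f i x) (hfn : ∀ x, 0 ≤ f n x)
    (ht : ∀ i ∈ Finset.Ico 1 n, t i ≤ t (i + 1)) (htS : ∀ i ∈ Finset.Ico 1 n, t i ∈ S)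
    (hSn : S ⊆ Iic (t n)) :
    κ * μ.real (hitEvent X S θ)
      ≤ ∑ i ∈ Finset.Icc 1 n, ∫ ω, f i (X (t i) ω) ∂μ
        - ∑ i ∈ Finset.Ico 1 n, ∫ ω, f (i + 1) (X (t i) ω) ∂μ := by
  have h := mul_measureReal_hitEvent_Iic_add_setIntegral_compl_le hX hS hf hfθ hf_anti ht htS n
    (Finset.mem_Icc.2 ⟨hn, le_rfl⟩)
  rw [inter_eq_left.2 hSn] at h
  have hpos : 0 ≤ ∫ ω in (hitEvent X S θ)ᶜ, f n (X (t n) ω) ∂μ :=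
    integral_nonneg fun ω => hfn (X (t n) ω)
  linarith

end Chain

lemma monotoneOn_Icc_of_le_add_one {β : Type*} [Preorder β] {a : ℕ → β} {k n : ℕ}
    (h : ∀ i ∈ Finset.Ico k n, a i ≤ a (i + 1)) : MonotoneOn a (Icc k n) :=
  monotoneOn_of_le_succ ordConnected_Icc fun i _ hi hi' =>
    h i (Finset.mem_Ico.2 ⟨hi.1, Order.succ_le_iff.1 hi'.2⟩)

section UpperBound

variable {Ω : Type} [m0 : MeasurableSpace Ω] {μ : Measure Ω} {ℱ : Filtration ℝ m0}
  [IsFiniteMeasure μ] {X : ℝ → Ω → ℝ} {t : ℕ → ℝ} {n : ℕ} {ζ : ℕ → ℝ → ℝ} {m : ℝ} {S : Set ℝ}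

lemma UBsum_eq (hX : ∀ s, Integrable (X s) μ) :
    UBsum μ X t n ζ m
      = ∑ i ∈ Finset.Icc 1 n, ∫ ω, normCall (ζ i m) m (X (t i) ω) ∂μ
        - ∑ i ∈ Finset.Ico 1 n, ∫ ω, normCall (ζ (i + 1) m) m (X (t i) ω) ∂μ := by
  have hlam : ∀ i, ∫ ω, lam n ζ m i (X (t i) ω) ∂μ
      = ∫ ω, normCall (ζ i m) m (X (t i) ω) ∂μ
        - if i < n then ∫ ω, normCall (ζ (i + 1) m) m (X (t i) ω) ∂μ else 0 := by
    intro i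
    by_cases h : i < n
    · simp only [lam_eq, h, if_true]
      exact integral_sub ((hX _).normCall_comp _ _) ((hX _).normCall_comp _ _)
    · simp only [lam_eq, h, if_false, sub_zero]
  have hIco : (Finset.Icc 1 n).filter (· < n) = Finset.Ico 1 n := by
    ext
    simp only [Finset.mem_filter, Finset.mem_Icc, Finset.mem_Ico]
    omega
  simp only [UBsum, hlam, Finset.sum_sub_distrib, ← Finset.sum_filter, hIco]

lemma mul_measureReal_hitEvent_le_UBsum (hX : Submartingale X ℱ μ) (hn : 1 ≤ n)
    (ht : ∀ i ∈ Finset.Ico 1 n, t i ≤ t (i + 1)) (hS : S.Countable)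
    (htS : ∀ i ∈ Finset.Ico 1 n, t i ∈ S) (hSn : S ⊆ Iic (t n))
    (hζ : ∀ i ∈ Finset.Ico 1 n, ζ i m ≤ ζ (i + 1) m) (hζn : ζ n m < m) {δ : ℝ} (hδ : 0 ≤ δ) :
    (1 - δ / (m - ζ n m)) * μ.real (hitEvent X S (m - δ)) ≤ UBsum μ X t n ζ m := by
  have hζ_le : ∀ i ∈ Finset.Icc 1 n, ζ i m ≤ ζ n m := fun i hi =>
    monotoneOn_Icc_of_le_add_one hζ (Finset.mem_Icc.1 hi) (mem_Icc.2 ⟨hn, le_rfl⟩)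
      (Finset.mem_Icc.1 hi).2
  rw [UBsum_eq hX.integrable]
  refine mul_measureReal_hitEvent_le hX.stronglyAdapted hS hn
    (fun i hi => hX.normCall_comp ((hζ_le i hi).trans hζn.le))
    (fun i hi x hx => one_sub_div_le_normCall (sub_pos.2 hζn) (by linarith [hζ_le i hi]) hδ hx)
    (fun i hi x hx => normCall_le_normCall (hζ i hi) ?_ (by linarith))
    (normCall_nonneg hζn.le) ht htS hSn
  obtain ⟨hi1, hin⟩ := Finset.mem_Ico.1 hi
  exact (hζ_le (i + 1) (Finset.mem_Icc.2 ⟨by omega, hin⟩)).trans_lt hζn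

end UpperBound

lemma measure_iInter_le_ofReal_of_mul_le {Ω : Type*} [MeasurableSpace Ω] {μ : Measure Ω}
    [IsProbabilityMeasure μ] {E : ℕ → Set Ω} {c U : ℝ} (hc : 0 < c)
    (hE : ∀ k : ℕ, (1 - 1 / (k + 1) / c) * μ.real (E k) ≤ U) :
    μ (⋂ k, E k) ≤ ENNReal.ofReal U := by
  have hbound : ∀ k : ℕ, μ.real (⋂ k, E k) ≤ U + 1 / (k + 1) / c := by
    intro k
    set d := 1 / ((k : ℝ) + 1) / c
    have hd : 0 ≤ d := by positivity
    have h := hE k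
    have hmono : μ.real (⋂ k, E k) ≤ μ.real (E k) := measureReal_mono (iInter_subset _ k)
    have hle : μ.real (E k) ≤ 1 := measureReal_le_one
    rcases le_total d 1 with hd1 | hd1 <;>
      nlinarith [measureReal_nonneg (μ := μ) (s := ⋂ k, E k)]
  have hlim : Tendsto (fun k : ℕ => U + 1 / ((k : ℝ) + 1) / c) atTop (nhds U) := by
    simpa using (tendsto_one_div_add_atTop_nhds_zero_nat.div_const c).const_add U
  rw [← ENNReal.ofReal_toReal (measure_ne_top μ _)]
  exact ENNReal.ofReal_le_ofReal (ge_of_tendsto' hlim hbound)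

lemma measurableSet_setOf_mem_iInter_hitEvent {Ω ι : Type*} [MeasurableSpace Ω]
    {X : ι → Ω → ℝ} (hX : ∀ s, Measurable (X s)) {S : Set ι} (hS : S.Countable) :
    MeasurableSet {p : Ω × ℝ | p.1 ∈ ⋂ k : ℕ, hitEvent X S (p.2 - 1 / (k + 1))} := by
  simp only [hitEvent, mem_iInter, mem_iUnion, mem_ofPred_eq, ofPred_forall,
    ofPred_exists]
  exact MeasurableSet.iInter fun k => MeasurableSet.biUnion hS fun s _ =>
    measurableSet_le (by fun_prop) ((hX s).comp measurable_fst)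

lemma exists_lt_of_lt_runMax {x : ℝ → ℝ} (hx : ∀ r, ContinuousWithinAt x (Ici r) r)
    {T a : ℝ} (hT : 0 ≤ T) (ha : a < runMax x T) {S : Set ℝ}
    (hQS : range ((↑) : ℚ → ℝ) ∩ Icc 0 T ⊆ S) (hTS : T ∈ S) :
    ∃ s ∈ S, a < x s := by
  obtain ⟨r, hr, hxr⟩ : ∃ r ∈ Icc 0 T, a < x r := by
    by_cases hbdd : BddAbove (x '' Icc 0 T)
    · obtain ⟨_, ⟨r, hr, rfl⟩, h⟩ :=
        exists_lt_of_lt_csSup ((nonempty_Icc.2 hT).image x) ha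
      exact ⟨r, hr, h⟩
    · obtain ⟨_, ⟨r, hr, rfl⟩, h⟩ := not_bddAbove_iff.1 hbdd a
      exact ⟨r, hr, h⟩
  rcases hr.2.eq_or_lt with rfl | hrT
  · exact ⟨r, hTS, hxr⟩
  obtain ⟨u, hru, hu⟩ := (mem_nhdsGE_iff_exists_Ico_subset.1 (hx r (Ioi_mem_nhds hxr)))
  obtain ⟨q, hrq, hq⟩ := exists_rat_btwn (lt_min hru hrT)
  exact ⟨q, hQS ⟨⟨q, rfl⟩, hr.1.trans hrq.le, (hq.trans_le (min_le_right _ _)).le⟩,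
    hu ⟨hrq.le, hq.trans_le (min_le_left _ _)⟩⟩

lemma lintegral_ofReal_sub_le_setLIntegral {Ω : Type*} [MeasurableSpace Ω] {μ : Measure Ω}
    [SFinite μ] (φ : StieltjesFunction ℝ) (x₀ : ℝ) {M : Ω → ℝ} {H : ℝ → Set Ω}
    (hH : MeasurableSet {p : Ω × ℝ | p.1 ∈ H p.2}) (hMH : ∀ ω, ∀ m ∈ Ioc x₀ (M ω), ω ∈ H m)
    {g : ℝ → ℝ≥0∞} (hg : ∀ m ∈ Ioi x₀, μ (H m) ≤ g m) :
    ∫⁻ ω, ENNReal.ofReal (φ (M ω) - φ x₀) ∂μ ≤ ∫⁻ m in Ioi x₀, g m ∂φ.measure := by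
  set Z := {p : Ω × ℝ | x₀ < p.2 ∧ p.1 ∈ H p.2}
  have hZ : MeasurableSet Z := (measurable_snd measurableSet_Ioi).inter hH
  calc ∫⁻ ω, ENNReal.ofReal (φ (M ω) - φ x₀) ∂μ ≤ ∫⁻ ω, φ.measure (Prod.mk ω ⁻¹' Z) ∂μ :=
        lintegral_mono fun ω => by
          rw [← φ.measure_Ioc]
          exact measure_mono fun m hm => ⟨hm.1, hMH ω m hm⟩
    _ = ∫⁻ m, μ ((·, m) ⁻¹' Z) ∂φ.measure := by
        rw [← Measure.prod_apply hZ, Measure.prod_apply_symm hZ]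
    _ ≤ ∫⁻ m, (Ioi x₀).indicator g m ∂φ.measure := lintegral_mono fun m => by
        by_cases hm : x₀ < m
        · simpa [Z, hm] using hg m hm
        · simp [Z, hm]
    _ = ∫⁻ m in Ioi x₀, g m ∂φ.measure := lintegral_indicator measurableSet_Ioi _

theorem main_result_part1_i_general
    {Ω : Type} [m0 : MeasurableSpace Ω] (μ : Measure Ω) [IsProbabilityMeasure μ]
    (x₀ : ℝ) (n : ℕ) (hn : 1 ≤ n)
    (t : ℕ → ℝ) (ht0 : t 0 = 0) (htmono : ∀ i < n, t i ≤ t (i + 1))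
    (φ : StieltjesFunction ℝ)
    (ζ : ℕ → ℝ → ℝ) (hζ : memZ x₀ n ζ)
    (ℱ : Filtration ℝ m0) (X : ℝ → Ω → ℝ)
    (hX : Submartingale X ℱ μ)
    (hcadlag : ∀ ω, IsCadlag fun s => X s ω) :
    (∫⁻ ω, ENNReal.ofReal (φ (runMax (fun s => X s ω) (t n)) - φ x₀) ∂μ)
      ≤ UBtail μ X φ x₀ t n ζ := by
  have ht : MonotoneOn t (Icc 0 n) :=
    monotoneOn_Icc_of_le_add_one fun i hi => htmono i (Finset.mem_Ico.1 hi).2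
  have hT : 0 ≤ t n := ht0 ▸ ht ⟨le_rfl, Nat.zero_le n⟩ ⟨Nat.zero_le n, le_rfl⟩ (Nat.zero_le n)
  set S := (range ((↑) : ℚ → ℝ) ∩ Icc 0 (t n)) ∪ t '' Icc 1 n
  have hS : S.Countable :=
    ((countable_range _).mono inter_subset_left).union ((finite_Icc 1 n).image t).countable
  have htS : ∀ i ∈ Icc 1 n, t i ∈ S := fun i hi => Or.inr ⟨i, hi, rfl⟩
  have hSn : S ⊆ Iic (t n) := by
    rintro s (hs | ⟨i, hi, rfl⟩)
    exacts [hs.2.2, ht ⟨Nat.zero_le i, hi.2⟩ ⟨Nat.zero_le n, le_rfl⟩ hi.2]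
  have hpath : ∀ ω, ∀ m ∈ Ioc x₀ (runMax (fun s => X s ω) (t n)),
      ω ∈ ⋂ k : ℕ, hitEvent X S (m - 1 / (k + 1)) := by
    refine fun ω m hm => mem_iInter.2 fun k => ?_
    obtain ⟨s, hs, hlt⟩ := exists_lt_of_lt_runMax (hcadlag ω).1 hT (a := m - 1 / (k + 1))
      (by linarith [hm.2, show (0 : ℝ) < 1 / (k + 1) by positivity]) subset_union_left
      (htS n ⟨hn, le_rfl⟩)
    exact mem_biUnion hs hlt.le
  have hlevel : ∀ m ∈ Ioi x₀,
      μ (⋂ k : ℕ, hitEvent X S (m - 1 / (k + 1))) ≤ ENNReal.ofReal (UBsum μ X t n ζ m) :=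
    fun m hm => measure_iInter_le_ofReal_of_mul_le (sub_pos.2 (hζ.2.2 m hm)) fun k =>
      mul_measureReal_hitEvent_le_UBsum hX hn (fun i hi => htmono i (Finset.mem_Ico.1 hi).2) hS
        (fun i hi => htS i (Ico_subset_Icc_self (Finset.mem_Ico.1 hi))) hSn
        (fun i hi => hζ.2.1 i (Finset.mem_Ico.1 hi).1 (Finset.mem_Ico.1 hi).2 m hm)
        (hζ.2.2 m hm) (by positivity)
  exact lintegral_ofReal_sub_le_setLIntegral φ x₀ (measurableSet_setOf_mem_iInter_hitEvent
    (fun s => ((hX.stronglyAdapted s).measurable).mono (ℱ.le s) le_rfl) hS) hpath hlevel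

/-- **Main Result, Part 1 (i)**: for every right-continuous nondecreasing `φ`
(encoded as a Stieltjes function), every `ζ ∈ 𝒵` and every càdlàg submartingale `X`
with `X_0 = X₀` a.s., one has `E[φ(X̄_T)] ≤ UB(X, φ, ζ) = φ(X₀) + UBtail`, both sides
taking values in `(-∞, ∞]` (here stated equivalently, after subtracting `φ(X₀)`,
as an inequality in `[0, ∞]`). -/
theorem main_result_part1_i
    {Ω : Type} [m0 : MeasurableSpace Ω] (μ : Measure Ω) [IsProbabilityMeasure μ]
    (x₀ : ℝ) (n : ℕ) (hn : 1 ≤ n)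
    (t : ℕ → ℝ) (ht0 : t 0 = 0) (htmono : ∀ i < n, t i ≤ t (i + 1))
    (φ : StieltjesFunction ℝ)
    (ζ : ℕ → ℝ → ℝ) (hζ : memZ x₀ n ζ)
    (ℱ : Filtration ℝ m0) (X : ℝ → Ω → ℝ)
    (hX : Submartingale X ℱ μ)
    (hcadlag : ∀ ω, IsCadlag fun s => X s ω)
    (hinit : ∀ᵐ ω ∂μ, X 0 ω = x₀) :
    (∫⁻ ω, ENNReal.ofReal (φ (runMax (fun s => X s ω) (t n)) - φ x₀) ∂μ)
      ≤ UBtail μ X φ x₀ t n ζ :=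
  main_result_part1_i_general (m0 := m0) μ x₀ n hn t ht0 htmono φ ζ hζ ℱ X hX hcadlag
end
end

section
/- Let ξ = (ξ₁,…,ξₙ) be nondecreasing right-continuous functions and let X be an iterated Azéma–Yor type embedding based on ξ. Then for every m > X₀ with ξₙ(m) < m, almost surely 1{X̄_{tₙ} ≥ m} = Υₙ(X, m, ζ(m)), where ζᵢ(m) := min_{j≥i} ξⱼ(m) for i = 1,…,n. -/
open MeasureTheory Set Filter
open scoped ENNReal NNReal Classical

noncomputable section

/-- The pathwise quantity `Υₙ(ω, m, ζ)` of Obłój–Spoida–Touzi. -/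
def Ups (ω : ℝ → ℝ) (t : ℕ → ℝ) (n : ℕ) (m : ℝ) (ζ : ℕ → ℝ) : ℝ :=
  (∑ i ∈ Finset.Icc 1 n,
      (ppart (ω (t i) - ζ i) / (m - ζ i) +
        (if runMax ω (t (i - 1)) < m ∧ m ≤ runMax ω (t i) then
          (m - ω (t i)) / (m - ζ i) else 0)))
    -
  (∑ i ∈ Finset.Icc 1 (n - 1),
      (ppart (ω (t i) - ζ (i + 1)) / (m - ζ (i + 1)) +
        (if m ≤ runMax ω (t i) ∧ ζ (i + 1) ≤ ω (t i) then
          (ω (t (i + 1)) - ω (t i)) / (m - ζ (i + 1)) else 0)))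

/-- `B` is a standard one-dimensional Brownian motion started at `x₀` under `μ`:
measurable in each time, continuous paths, `B 0 = x₀`, independent increments, and
Gaussian increments `B u - B s ~ N(0, u - s)` for `0 ≤ s ≤ u`. -/
structure IsBrownianMotion {Ω : Type} [m0 : MeasurableSpace Ω] (μ : Measure Ω)
    (x₀ : ℝ) (B : ℝ → Ω → ℝ) : Prop where
  meas : ∀ u : ℝ, Measurable (B u)
  init : ∀ ω, B 0 ω = x₀
  cont : ∀ ω, Continuous fun u => B u ω
  indep : ∀ s : ℕ → ℝ, Monotone s → 0 ≤ s 0 →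
    ProbabilityTheory.iIndepFun (m := fun _ => (inferInstance : MeasurableSpace ℝ))
      (fun i ω => B (s (i + 1)) ω - B (s i) ω) μ
  gauss : ∀ s u : ℝ, 0 ≤ s → s ≤ u →
    μ.map (fun ω => B u ω - B s ω) =
      ProbabilityTheory.gaussianReal 0 (Real.toNNReal (u - s))

/-- One step of the iterated Azéma–Yor construction: the first time after `s` at which
the path `f` is at or below the boundary `ξ` applied to its running maximum (provided
`f` is strictly above the boundary at time `s`; otherwise time `s` itself). -/
def hitTau (f : ℝ → ℝ) (ξ : ℝ → ℝ) (s : ℝ) : ℝ :=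
  if ξ (runMax f s) < f s then
    sInf {u : ℝ | s ≤ u ∧ f u ≤ ξ (runMax f u)}
  else s

/-- The iterated Azéma–Yor stopping times `τ₀ = 0`, `τᵢ` for a path `f` and
boundaries `ξ₁, …`. -/
def iterTau (f : ℝ → ℝ) (ξ : ℕ → ℝ → ℝ) : ℕ → ℝ
  | 0 => 0
  | (i + 1) => hitTau f (ξ (i + 1)) (iterTau f ξ i)

/-- `X` is an iterated Azéma–Yor type embedding based on the boundaries `ξ`:
`X` is a continuous martingale (for some filtration) and, for some Brownian motion `B`
started at `x₀` on the same space, `(X_{tᵢ}, X̄_{tᵢ}) = (B_{τᵢ}, B̄_{τᵢ})` a.s.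
for `i = 0, …, n`. -/
def IsIterAYEmbedding {Ω : Type} [m0 : MeasurableSpace Ω] (μ : Measure Ω)
    (x₀ : ℝ) (t : ℕ → ℝ) (n : ℕ) (ξ : ℕ → ℝ → ℝ) (X : ℝ → Ω → ℝ) : Prop :=
  (∃ ℱ : Filtration ℝ m0, Martingale X ℱ μ) ∧
  (∀ ω, Continuous fun s => X s ω) ∧
  ∃ B : ℝ → Ω → ℝ, IsBrownianMotion μ x₀ B ∧
    ∀ i ≤ n, ∀ᵐ ω ∂μ,
      X (t i) ω = B (iterTau (fun s => B s ω) ξ i) ω ∧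
      runMax (fun s => X s ω) (t i) =
        runMax (fun s => B s ω) (iterTau (fun s => B s ω) ξ i)

/-!
Both sides only see the path at the times `tᵢ`, where `X` agrees with a Brownian path `B` at the
Azéma–Yor times `τᵢ`; and `B` is almost surely unbounded below, so every `τᵢ` is a genuine hitting
time. Pathwise, `Υₙ` telescopes. While the running maximum is below `m`, the `i`-th term cancels
the `i`-th correction: either `ζᵢ = ζᵢ₊₁`, or `B_{τᵢ} ≤ ξᵢ(B̄_{τᵢ}) ≤ ξᵢ(m) = ζᵢ`. At the first
`τₖ` with `B̄_{τₖ} ≥ m` the term equals `1`, since `B_{τₖ} ≥ ζₖ`: after the crossing the path stays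
above `ξₖ(m)` until `τₖ`. From then on the `(i+1)`-st term cancels the `i`-th correction, because
`B` either does not move (`B_{τᵢ} < ζᵢ₊₁`) or stays above `ζᵢ₊₁` up to `τᵢ₊₁`.
-/

lemma sum_Icc_sub_sum_Icc_pred {M : Type*} [AddCommGroup M] {F G : ℕ → M} {k n : ℕ} (hk : 1 ≤ k)
    (hkn : k ≤ n) :
    ∑ i ∈ Finset.Icc 1 n, F i - ∑ i ∈ Finset.Icc 1 (n - 1), G i =
      ∑ i ∈ Finset.Ico 1 k, (F i - G i) + F k + ∑ i ∈ Finset.Ico k n, (F (i + 1) - G i) := by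
  have hIcc : Finset.Icc 1 (n - 1) = Finset.Ico 1 n := by
    rw [← Finset.Ico_add_one_right_eq_Icc, Nat.sub_add_cancel (hk.trans hkn)]
  rw [← Finset.Ico_add_one_right_eq_Icc, hIcc,
    ← Finset.sum_Ico_consecutive F hk (k := n + 1) (by omega),
    ← Finset.sum_Ico_consecutive G hk hkn,
    Finset.sum_eq_sum_Ico_succ_bot (Nat.lt_succ_of_le hkn),
    ← Finset.sum_Ico_add' F k n 1, Finset.sum_sub_distrib, Finset.sum_sub_distrib]
  abel

lemma sInf_image_Icc_eq_min {α : Type*} [ConditionallyCompleteLinearOrder α] (g : ℕ → α) {i n : ℕ}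
    (h : i < n) :
    sInf (g '' Icc i n) = min (g i) (sInf (g '' Icc (i + 1) n)) := by
  rw [← insert_Icc_add_one_left_eq_Icc h.le, image_insert_eq,
    csInf_insert ((finite_Icc _ _).image g).bddBelow (((nonempty_Icc (a := i + 1)).2 h).image g)]

section BackwardMinimum

variable {α : Type*} [LinearOrder α] {ζ g : ℕ → α} {n : ℕ}

lemma le_of_eq_min_succ (hζn : ζ n = g n) (hζ : ∀ i ∈ Finset.Ico 1 n, ζ i = min (g i) (ζ (i + 1))) :
    ∀ i ∈ Finset.Icc 1 n, ζ i ≤ g i := fun i hi => by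
  obtain ⟨h1, h2⟩ := Finset.mem_Icc.1 hi
  rcases h2.eq_or_lt with rfl | hlt
  · exact hζn.le
  · exact (hζ i (Finset.mem_Ico.2 ⟨h1, hlt⟩)).trans_le (min_le_left _ _)

lemma monotoneOn_of_eq_min_succ (hζ : ∀ i ∈ Finset.Ico 1 n, ζ i = min (g i) (ζ (i + 1))) :
    MonotoneOn ζ (Set.Icc 1 n) :=
  monotoneOn_of_le_add_one ordConnected_Icc fun i _ hi hi' =>
    (hζ i (Finset.mem_Ico.2 ⟨hi.1, hi'.2⟩)).trans_le (min_le_right _ _)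

end BackwardMinimum

lemma bddBelow_range_shift_iff {α : Type*} [AddCommGroup α] [LinearOrder α] [IsOrderedAddMonoid α]
    (g : ℕ → α) (N : ℕ) : BddBelow (range fun k => g (N + k) - g N) ↔ BddBelow (range g) := by
  constructor
  · rintro ⟨b, hb⟩
    refine (isBoundedUnder_of_eventually_ge (a := b + g N) ?_).bddBelow_range
    filter_upwards [eventually_ge_atTop N] with k hk
    obtain ⟨j, rfl⟩ := Nat.exists_eq_add_of_le hk
    exact le_sub_iff_add_le.1 (hb ⟨j, rfl⟩)
  · rintro ⟨b, hb⟩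
    exact ⟨b - g N, by rintro _ ⟨k, rfl⟩; exact sub_le_sub_right (hb ⟨N + k, rfl⟩) _⟩

section RunningMaximum

variable {f : ℝ → ℝ} {s u : ℝ}

lemma runMax_zero (f : ℝ → ℝ) : runMax f 0 = f 0 := by
  simp [runMax]

lemma le_runMax (hf : Continuous f) (h0 : 0 ≤ s) (hsu : s ≤ u) : f s ≤ runMax f u :=
  le_csSup (isCompact_Icc.image hf).bddAbove ⟨s, ⟨h0, hsu⟩, rfl⟩

lemma runMax_le {c : ℝ} (h0 : 0 ≤ u) (h : ∀ s, 0 ≤ s → s ≤ u → f s ≤ c) : runMax f u ≤ c :=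
  csSup_le ⟨f 0, 0, ⟨le_rfl, h0⟩, rfl⟩ (by rintro _ ⟨s, hs, rfl⟩; exact h s hs.1 hs.2)

lemma runMax_mono (hf : Continuous f) (h0 : 0 ≤ s) (hsu : s ≤ u) : runMax f s ≤ runMax f u :=
  runMax_le h0 fun _ hv0 hvs => le_runMax hf hv0 (hvs.trans hsu)

lemma exists_apply_eq_runMax (hf : Continuous f) (h0 : 0 ≤ u) :
    ∃ w ∈ Icc 0 u, f w = runMax f u := by
  obtain ⟨w, hw, hmax⟩ := isCompact_Icc.exists_isMaxOn (nonempty_Icc.2 h0) hf.continuousOn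
  exact ⟨w, hw, le_antisymm (le_runMax hf hw.1 hw.2)
    (runMax_le h0 fun s hs0 hsu => hmax ⟨hs0, hsu⟩)⟩

lemma continuousWithinAt_runMax (hf : Continuous f) (h0 : 0 ≤ u) :
    ContinuousWithinAt (runMax f) (Ici u) u := by
  rw [ContinuousWithinAt, tendsto_order]
  refine ⟨fun a ha => ?_, fun b hb => ?_⟩
  · filter_upwards [self_mem_nhdsWithin] with v hv
    exact ha.trans_le (runMax_mono hf h0 hv)
  · obtain ⟨b', hub', hb'b⟩ := exists_between hb
    have hfu : f u < b' := (le_runMax hf h0 le_rfl).trans_lt hub'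
    obtain ⟨l, r, ⟨hl, hr⟩, hlr⟩ :=
      mem_nhds_iff_exists_Ioo_subset.1 (hf.continuousAt.eventually_lt continuousAt_const hfu)
    filter_upwards [Ico_mem_nhdsGE hr] with v hv
    refine (runMax_le (h0.trans hv.1) fun w hw0 hwv => ?_).trans_lt (max_lt hb hb'b)
    rcases le_or_gt w u with hwu | hwu
    · exact le_max_of_le_left (le_runMax hf hw0 hwu)
    · exact le_max_of_le_right (hlr ⟨hl.trans hwu, hwv.trans_lt hv.2⟩).le

end RunningMaximum

section AzemaYorStep

variable {f : ℝ → ℝ} {ξ : ℝ → ℝ} {s u : ℝ}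

lemma hitTau_of_le (h : f s ≤ ξ (runMax f s)) : hitTau f ξ s = s :=
  if_neg h.not_gt

/-- The path eventually meets the boundary, so the infimum defining `hitTau` is not the junk
value `sInf ∅ = 0`. -/
lemma exists_ge_apply_le_boundary (hf : Continuous f) (hlow : ∀ c, ∃ᶠ u in atTop, f u ≤ c)
    (hξ : Monotone ξ) (hs : 0 ≤ s) : ∃ u, s ≤ u ∧ f u ≤ ξ (runMax f u) := by
  obtain ⟨u, hsu, hu⟩ := (hlow (ξ (runMax f s))).forall_exists_of_atTop s
  exact ⟨u, hsu, hu.trans (hξ (runMax_mono hf hs hsu))⟩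

lemma le_hitTau (hf : Continuous f) (hlow : ∀ c, ∃ᶠ u in atTop, f u ≤ c) (hξ : Monotone ξ)
    (hs : 0 ≤ s) : s ≤ hitTau f ξ s := by
  unfold hitTau
  split_ifs
  · exact le_csInf (exists_ge_apply_le_boundary hf hlow hξ hs) fun _ hv => hv.1
  · exact le_rfl

lemma lt_of_mem_Ico_hitTau (hu : u ∈ Ico s (hitTau f ξ s)) : ξ (runMax f u) < f u := by
  unfold hitTau at hu
  split_ifs at hu
  · exact not_le.1 fun h => notMem_of_lt_csInf hu.2 ⟨s, fun _ hv => hv.1⟩ ⟨hu.1, h⟩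
  · exact absurd hu.2 hu.1.not_gt

lemma apply_hitTau_le (hf : Continuous f) (hlow : ∀ c, ∃ᶠ u in atTop, f u ≤ c)
    (hξ : Monotone ξ) (hξrc : ∀ x, ContinuousWithinAt ξ (Ici x) x) (hs : 0 ≤ s) :
    f (hitTau f ξ s) ≤ ξ (runMax f (hitTau f ξ s)) := by
  by_cases hc : ξ (runMax f s) < f s
  · set S := {u | s ≤ u ∧ f u ≤ ξ (runMax f u)}
    have hτ : hitTau f ξ s = sInf S := if_pos hc
    have hne : S.Nonempty := exists_ge_apply_le_boundary hf hlow hξ hs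
    have hbdd : BddBelow S := ⟨s, fun _ hv => hv.1⟩
    have h0 : 0 ≤ sInf S := hs.trans (le_csInf hne fun _ hv => hv.1)
    have hξM : ContinuousWithinAt (fun v => ξ (runMax f v)) (Ici (sInf S)) (sInf S) :=
      (hξrc _).comp (continuousWithinAt_runMax hf h0) fun _ hv => runMax_mono hf h0 hv
    rw [hτ]
    exact ContinuousWithinAt.closure_le (csInf_mem_closure hne hbdd) hf.continuousWithinAt
      (hξM.mono fun _ hv => csInf_le hbdd hv) fun _ hv => hv.2
  · rw [hitTau_of_le (not_lt.1 hc)]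
    exact not_lt.1 hc

lemma boundary_runMax_le_apply_hitTau (hf : Continuous f) (hξ : Monotone ξ) (hu0 : 0 ≤ u)
    (hu : u ∈ Ico s (hitTau f ξ s)) : ξ (runMax f u) ≤ f (hitTau f ξ s) := by
  refine ContinuousWithinAt.closure_le (s := Ico u (hitTau f ξ s)) ?_ continuousWithinAt_const
    hf.continuousWithinAt fun v hv => ?_
  · rw [closure_Ico hu.2.ne]
    exact ⟨hu.2.le, le_rfl⟩
  · exact (hξ (runMax_mono hf hu0 hv.1)).trans (lt_of_mem_Ico_hitTau ⟨hu.1.trans hv.1, hv.2⟩).le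

/-- If the running maximum crosses `m` during `[s, hitTau f ξ s]`, then either it crossed strictly
before the stopping time, after which `f` stays above `ξ m`, or the crossing happens at the
stopping time itself, where `f` is at its maximum. -/
lemma min_le_apply_hitTau_of_crossing {m : ℝ} (hf : Continuous f)
    (hlow : ∀ c, ∃ᶠ u in atTop, f u ≤ c) (hξ : Monotone ξ) (hs : 0 ≤ s)
    (hbefore : runMax f s < m) (hafter : m ≤ runMax f (hitTau f ξ s)) :
    min (ξ m) m ≤ f (hitTau f ξ s) := by
  have hτ0 : 0 ≤ hitTau f ξ s := hs.trans (le_hitTau hf hlow hξ hs)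
  by_cases hearly : ∃ u ∈ Ico 0 (hitTau f ξ s), m ≤ runMax f u
  · obtain ⟨u, ⟨hu0, huτ⟩, hmu⟩ := hearly
    have hsu : s ≤ u := by
      by_contra! hus
      exact (hbefore.trans_le hmu).not_ge (runMax_mono hf hu0 hus.le)
    exact (min_le_left _ _).trans ((hξ hmu).trans
      (boundary_runMax_le_apply_hitTau hf hξ hu0 ⟨hsu, huτ⟩))
  · push Not at hearly
    obtain ⟨w, ⟨hw0, hwτ⟩, hfw⟩ := exists_apply_eq_runMax hf hτ0
    obtain rfl : w = hitTau f ξ s := by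
      refine hwτ.eq_or_lt.resolve_right fun hlt => ?_
      exact (hafter.trans_eq hfw.symm).not_gt
        ((le_runMax hf hw0 le_rfl).trans_lt (hearly w ⟨hw0, hlt⟩))
    exact (min_le_right _ _).trans (hafter.trans_eq hfw.symm)

end AzemaYorStep

section IteratedAzemaYor

variable {f : ℝ → ℝ} {ξ : ℕ → ℝ → ℝ} {n : ℕ}

lemma iterTau_nonneg (hf : Continuous f) (hlow : ∀ c, ∃ᶠ u in atTop, f u ≤ c)
    (hξ : ∀ i ∈ Finset.Icc 1 n, Monotone (ξ i)) : ∀ i ≤ n, 0 ≤ iterTau f ξ i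
  | 0, _ => le_rfl
  | i + 1, hi => by
    have ih := iterTau_nonneg hf hlow hξ i (by omega)
    exact ih.trans (le_hitTau hf hlow (hξ (i + 1) (by simp; omega)) ih)

lemma monotoneOn_iterTau (hf : Continuous f) (hlow : ∀ c, ∃ᶠ u in atTop, f u ≤ c)
    (hξ : ∀ i ∈ Finset.Icc 1 n, Monotone (ξ i)) : MonotoneOn (iterTau f ξ) (Set.Iic n) :=
  monotoneOn_of_le_add_one ordConnected_Iic fun i _ _ hi =>
    le_hitTau hf hlow (hξ (i + 1) (by simp at hi ⊢; omega))
      (iterTau_nonneg hf hlow hξ i (by simp at hi; omega))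

lemma apply_iterTau_le (hf : Continuous f) (hlow : ∀ c, ∃ᶠ u in atTop, f u ≤ c)
    (hξ : ∀ i ∈ Finset.Icc 1 n, Monotone (ξ i))
    (hξrc : ∀ i ∈ Finset.Icc 1 n, ∀ x, ContinuousWithinAt (ξ i) (Ici x) x) :
    ∀ i ∈ Finset.Icc 1 n, f (iterTau f ξ i) ≤ ξ i (runMax f (iterTau f ξ i))
  | 0, hi => by simp at hi
  | j + 1, hj => apply_hitTau_le hf hlow (hξ _ hj) (hξrc _ hj)
      (iterTau_nonneg hf hlow hξ j (by simp at hj; omega))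

end IteratedAzemaYor

section UpsAlgebra

lemma ppart_of_nonpos {a : ℝ} (h : a ≤ 0) : ppart a = 0 := max_eq_right h

lemma ppart_of_nonneg {a : ℝ} (h : 0 ≤ a) : ppart a = a := max_eq_left h

variable {ω : ℝ → ℝ} {t : ℕ → ℝ} {m : ℝ} {ζ : ℕ → ℝ} {i : ℕ}

def upsTerm (ω : ℝ → ℝ) (t : ℕ → ℝ) (m : ℝ) (ζ : ℕ → ℝ) (i : ℕ) : ℝ :=
  ppart (ω (t i) - ζ i) / (m - ζ i) +
    (if runMax ω (t (i - 1)) < m ∧ m ≤ runMax ω (t i) then (m - ω (t i)) / (m - ζ i) else 0)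

def upsCorrection (ω : ℝ → ℝ) (t : ℕ → ℝ) (m : ℝ) (ζ : ℕ → ℝ) (i : ℕ) : ℝ :=
  ppart (ω (t i) - ζ (i + 1)) / (m - ζ (i + 1)) +
    (if m ≤ runMax ω (t i) ∧ ζ (i + 1) ≤ ω (t i) then
      (ω (t (i + 1)) - ω (t i)) / (m - ζ (i + 1)) else 0)

lemma Ups_eq_sub (n : ℕ) :
    Ups ω t n m ζ = ∑ i ∈ Finset.Icc 1 n, upsTerm ω t m ζ i -
      ∑ i ∈ Finset.Icc 1 (n - 1), upsCorrection ω t m ζ i :=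
  rfl

lemma upsTerm_eq_upsCorrection (hM : runMax ω (t i) < m)
    (hζx : ζ i = ζ (i + 1) ∨ ω (t i) ≤ ζ i) (hζ : ζ i ≤ ζ (i + 1)) :
    upsTerm ω t m ζ i = upsCorrection ω t m ζ i := by
  simp only [upsTerm, upsCorrection, hM.not_ge, and_false, false_and, if_false, add_zero]
  rcases hζx with hζx | hx
  · rw [hζx]
  · rw [ppart_of_nonpos (sub_nonpos.2 hx), ppart_of_nonpos (sub_nonpos.2 (hx.trans hζ)),
      zero_div, zero_div]

lemma upsTerm_eq_zero (hM : runMax ω (t i) < m) (hx : ω (t i) ≤ ζ i) :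
    upsTerm ω t m ζ i = 0 := by
  simp [upsTerm, hM.not_ge, ppart_of_nonpos (sub_nonpos.2 hx)]

lemma upsTerm_succ_eq_one (hbefore : runMax ω (t i) < m) (hafter : m ≤ runMax ω (t (i + 1)))
    (hζx : ζ (i + 1) ≤ ω (t (i + 1))) (hζm : ζ (i + 1) < m) :
    upsTerm ω t m ζ (i + 1) = 1 := by
  rw [upsTerm, Nat.add_sub_cancel, if_pos ⟨hbefore, hafter⟩, ppart_of_nonneg (sub_nonneg.2 hζx),
    ← add_div, sub_add_sub_cancel', div_self (sub_ne_zero.2 hζm.ne')]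

lemma upsTerm_succ_eq_upsCorrection (hM : m ≤ runMax ω (t i))
    (hstop : ω (t i) < ζ (i + 1) → ω (t (i + 1)) = ω (t i))
    (hcont : ζ (i + 1) ≤ ω (t i) → ζ (i + 1) ≤ ω (t (i + 1))) :
    upsTerm ω t m ζ (i + 1) = upsCorrection ω t m ζ i := by
  simp only [upsTerm, upsCorrection, Nat.add_sub_cancel, hM.not_gt, hM, false_and, true_and,
    if_false, add_zero]
  split_ifs with hζx
  · rw [ppart_of_nonneg (sub_nonneg.2 hζx), ppart_of_nonneg (sub_nonneg.2 (hcont hζx)), ← add_div,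
      sub_add_sub_cancel']
  · rw [hstop (not_le.1 hζx), ppart_of_nonpos (sub_nonpos.2 (not_le.1 hζx).le), zero_div, add_zero]

end UpsAlgebra

theorem indicator_eq_Ups {ω : ℝ → ℝ} {t : ℕ → ℝ} {n : ℕ} {m : ℝ} {ζ : ℕ → ℝ} (hn : 1 ≤ n)
    (hζ : MonotoneOn ζ (Set.Icc 1 n)) (hζn : ζ n < m) (hM0 : runMax ω (t 0) < m)
    (hM : MonotoneOn (fun i => runMax ω (t i)) (Set.Iic n))
    (hbelow : ∀ i ∈ Finset.Ico 1 n, runMax ω (t i) < m → ζ i = ζ (i + 1) ∨ ω (t i) ≤ ζ i)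
    (hlast : runMax ω (t n) < m → ω (t n) ≤ ζ n)
    (hcross : ∀ i < n, runMax ω (t i) < m → m ≤ runMax ω (t (i + 1)) →
      ζ (i + 1) ≤ ω (t (i + 1)))
    (hstop : ∀ i < n, m ≤ runMax ω (t i) → ω (t i) < ζ (i + 1) → ω (t (i + 1)) = ω (t i))
    (hcont : ∀ i < n, m ≤ runMax ω (t i) → ζ (i + 1) ≤ ω (t i) →
      ζ (i + 1) ≤ ω (t (i + 1))) :
    (if m ≤ runMax ω (t n) then (1 : ℝ) else 0) = Ups ω t n m ζ := by
  have hζ_succ : ∀ i ∈ Finset.Ico 1 n, ζ i ≤ ζ (i + 1) := fun i hi => by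
    obtain ⟨h1, h2⟩ := Finset.mem_Ico.1 hi
    exact hζ ⟨h1, h2.le⟩ ⟨by omega, h2⟩ (by omega)
  have hcancel : ∀ i ∈ Finset.Ico 1 n, runMax ω (t i) < m →
      upsTerm ω t m ζ i - upsCorrection ω t m ζ i = 0 := fun i hi hi' =>
    sub_eq_zero.2 (upsTerm_eq_upsCorrection hi' (hbelow i hi hi') (hζ_succ i hi))
  rw [Ups_eq_sub]
  split_ifs with hreach
  · obtain ⟨k, hk_reach, hk_min⟩ : ∃ k, m ≤ runMax ω (t k) ∧ ∀ i < k, runMax ω (t i) < m :=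
      have hex : ∃ k, m ≤ runMax ω (t k) := ⟨n, hreach⟩
      ⟨Nat.find hex, Nat.find_spec hex, fun i hi => not_le.1 (Nat.find_min hex hi)⟩
    have hkn : k ≤ n := not_lt.1 fun hnk => (hk_min n hnk).not_ge hreach
    obtain ⟨j, rfl⟩ : ∃ j, k = j + 1 :=
      Nat.exists_eq_add_one.2 (Nat.pos_of_ne_zero fun hk => hM0.not_ge (hk ▸ hk_reach))
    rw [sum_Icc_sub_sum_Icc_pred (by omega) hkn, Finset.sum_eq_zero, Finset.sum_eq_zero,
      upsTerm_succ_eq_one (hk_min j j.lt_succ_self) hk_reach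
        (hcross j hkn (hk_min j j.lt_succ_self) hk_reach)
        ((hζ ⟨by omega, hkn⟩ ⟨hn, le_rfl⟩ hkn).trans_lt hζn)]
    · ring
    · intro i hi
      obtain ⟨h1, h2⟩ := Finset.mem_Ico.1 hi
      have hmi : m ≤ runMax ω (t i) := hk_reach.trans (hM hkn h2.le h1)
      exact sub_eq_zero.2 (upsTerm_succ_eq_upsCorrection hmi (hstop i h2 hmi) (hcont i h2 hmi))
    · intro i hi
      obtain ⟨h1, h2⟩ := Finset.mem_Ico.1 hi
      exact hcancel i (Finset.mem_Ico.2 ⟨h1, by omega⟩) (hk_min i h2)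
  · push Not at hreach
    rw [sum_Icc_sub_sum_Icc_pred hn le_rfl, Finset.Ico_self, Finset.sum_empty,
      upsTerm_eq_zero hreach (hlast hreach), Finset.sum_eq_zero]
    · ring
    · intro i hi
      have hin : i ≤ n := (Finset.mem_Ico.1 hi).2.le
      exact hcancel i hi ((hM hin (le_refl n) hin).trans_lt hreach)

lemma Ups_congr {ω₁ ω₂ : ℝ → ℝ} {t₁ t₂ : ℕ → ℝ} {n : ℕ} {m : ℝ} {ζ : ℕ → ℝ}
    (h : ∀ i ≤ n, ω₁ (t₁ i) = ω₂ (t₂ i)) (h' : ∀ i ≤ n, runMax ω₁ (t₁ i) = runMax ω₂ (t₂ i)) :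
    Ups ω₁ t₁ n m ζ = Ups ω₂ t₂ n m ζ := by
  unfold Ups
  congr 1 <;> refine Finset.sum_congr rfl fun i hi => ?_ <;>
    obtain ⟨h1, h2⟩ := Finset.mem_Icc.1 hi
  · rw [h i h2, h' i h2, h' (i - 1) (by omega)]
  · rw [h i (by omega), h' i (by omega), h (i + 1) (by omega)]

theorem indicator_eq_Ups_iterTau {f : ℝ → ℝ} {ξ : ℕ → ℝ → ℝ} {n : ℕ} {m : ℝ} {ζ : ℕ → ℝ}
    (hn : 1 ≤ n) (hf : Continuous f) (hlow : ∀ c, ∃ᶠ u in atTop, f u ≤ c)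
    (hξ : ∀ i ∈ Finset.Icc 1 n, Monotone (ξ i))
    (hξrc : ∀ i ∈ Finset.Icc 1 n, ∀ x, ContinuousWithinAt (ξ i) (Ici x) x)
    (hm : f 0 < m) (hξn : ξ n m < m) (hζn : ζ n = ξ n m)
    (hζ : ∀ i ∈ Finset.Ico 1 n, ζ i = min (ξ i m) (ζ (i + 1))) :
    (if m ≤ runMax f (iterTau f ξ n) then (1 : ℝ) else 0) = Ups f (iterTau f ξ) n m ζ := by
  have hτ0 := iterTau_nonneg hf hlow hξ
  have hsucc : ∀ i < n, i + 1 ∈ Finset.Icc 1 n := fun i hi => by simp; omega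
  have hζξ := le_of_eq_min_succ (g := fun i => ξ i m) hζn hζ
  have hζmono := monotoneOn_of_eq_min_succ hζ
  have hζm : ζ n < m := hζn ▸ hξn
  have hboundary := apply_iterTau_le hf hlow hξ hξrc
  refine indicator_eq_Ups hn hζmono hζm ?_ ?_ ?_ ?_ ?_ ?_ ?_
  · rwa [iterTau, runMax_zero]
  · exact fun a ha b hb hab => runMax_mono hf (hτ0 a ha) (monotoneOn_iterTau hf hlow hξ ha hb hab)
  · intro i hi hMi
    have hi' : i ∈ Finset.Icc 1 n := Finset.Ico_subset_Icc_self hi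
    rw [hζ i hi]
    rcases le_total (ξ i m) (ζ (i + 1)) with h | h
    · rw [min_eq_left h]
      exact Or.inr ((hboundary i hi').trans (hξ i hi' hMi.le))
    · exact Or.inl (min_eq_right h)
  · intro hMn
    exact hζn ▸ (hboundary n (by simp; omega)).trans (hξ n (by simp; omega) hMn.le)
  · intro i hi hbefore hafter
    have hζ_lt : ζ (i + 1) < m := (hζmono ⟨by omega, hi⟩ ⟨hn, le_rfl⟩ hi).trans_lt hζm
    exact (le_min (hζξ _ (hsucc i hi)) hζ_lt.le).trans
      (min_le_apply_hitTau_of_crossing hf hlow (hξ _ (hsucc i hi)) (hτ0 i hi.le) hbefore hafter)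
  · intro i hi hmi hx
    exact congrArg f (hitTau_of_le
      ((hx.le.trans (hζξ _ (hsucc i hi))).trans (hξ _ (hsucc i hi) hmi)))
  · intro i hi hmi hx
    rcases (le_hitTau hf hlow (hξ _ (hsucc i hi)) (hτ0 i hi.le)).eq_or_lt with heq | hlt
    · exact hx.trans_eq (congrArg f heq)
    · exact (hζξ _ (hsucc i hi)).trans ((hξ _ (hsucc i hi) hmi).trans
        (boundary_runMax_le_apply_hitTau hf (hξ _ (hsucc i hi)) (hτ0 i hi.le) ⟨le_rfl, hlt⟩))

section BrownianMotion

open ProbabilityTheory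

lemma gaussianReal_Iic_neg (σ : ℝ) (hσ : 0 < σ) :
    gaussianReal 0 (σ ^ 2).toNNReal (Iic (-σ)) = gaussianReal 0 1 (Iic (-1)) := by
  have hmap := gaussianReal_map_const_mul (μ := 0) (v := 1) σ
  rw [mul_zero, mul_one, ← Real.toNNReal_of_nonneg] at hmap
  rw [← hmap, Measure.map_apply (measurable_const_mul σ) measurableSet_Iic]
  congr 1
  ext x
  simp only [mem_preimage, mem_Iic]
  constructor <;> intro h <;> nlinarith

lemma gaussianReal_Iic_neg_one_ne_zero : gaussianReal 0 1 (Iic (-1 : ℝ)) ≠ 0 := fun h => by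
  simpa using gaussianReal_absolutelyContinuous' 0 one_ne_zero h

variable {Ω : Type} [m0 : MeasurableSpace Ω] {μ : Measure Ω} {x₀ : ℝ} {B : ℝ → Ω → ℝ}

/-- Kolmogorov's zero-one law: boundedness from below along integer times is a tail event of the
independent increments. -/
lemma IsBrownianMotion.measure_bddBelow_eq_zero_or_one (hB : IsBrownianMotion μ x₀ B) :
    μ {ω | BddBelow (range fun k : ℕ => B k ω)} = 0 ∨
      μ {ω | BddBelow (range fun k : ℕ => B k ω)} = 1 := by
  set D : ℕ → Ω → ℝ := fun i ω => B ((i + 1 : ℕ) : ℝ) ω - B (i : ℝ) ω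
  have hD : ∀ i, Measurable (D i) := fun i => (hB.meas _).sub (hB.meas _)
  have hindep : iIndep (fun i => MeasurableSpace.comap (D i) inferInstance) μ :=
    (iIndepFun_iff_iIndep _ _ _).1 (hB.indep _ Nat.mono_cast (by simp))
  refine measure_zero_or_one_of_measurableSet_limsup_atTop (fun i => (hD i).comap_le) hindep ?_
  rw [limsup_eq_iInf_iSup_of_nat]
  refine MeasurableSpace.measurableSet_iInf.2 fun N => ?_
  have htail : {ω | BddBelow (range fun k : ℕ => B k ω)} =
      {ω | BddBelow (range fun k => ∑ j ∈ Finset.range k, D (N + j) ω)} := by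
    ext ω
    simp only [mem_ofPred_eq, D, ← bddBelow_range_shift_iff (fun k : ℕ => B k ω) N]
    have htele := fun k => Finset.sum_range_sub (fun j => B ((N + j : ℕ) : ℝ) ω) k
    simp only [add_zero, ← add_assoc] at htele
    simp only [htele]
  rw [htail]
  refine measurableSet_bddBelow_range fun k => Finset.measurable_sum _ fun j _ => ?_
  exact (comap_measurable (D (N + j))).mono
    (le_iSup₂ (f := fun i (_ : i ≥ N) => MeasurableSpace.comap (D i) inferInstance) (N + j)
      (by omega)) le_rfl


lemma IsBrownianMotion.measure_forall_gt_le [IsProbabilityMeasure μ]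
    (hB : IsBrownianMotion μ x₀ B) (c : ℕ) :
    μ {ω | ∀ k : ℕ, -((c : ℝ) + 1) < B k ω - B 0 ω} ≤ 1 - gaussianReal 0 1 (Iic (-1)) := by
  set K : ℕ := (c + 1) ^ 2
  have hmeas : Measurable fun ω => B K ω - B 0 ω := (hB.meas _).sub (hB.meas _)
  have hlaw := hB.gauss 0 K le_rfl K.cast_nonneg
  rw [show (K : ℝ) - 0 = ((c : ℝ) + 1) ^ 2 by push_cast [K]; ring] at hlaw
  have hfall : μ {ω | B K ω - B 0 ω ≤ -((c : ℝ) + 1)} = gaussianReal 0 1 (Iic (-1)) := by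
    rw [← gaussianReal_Iic_neg ((c : ℝ) + 1) (by positivity), ← hlaw,
      Measure.map_apply hmeas measurableSet_Iic]
    rfl
  calc _ ≤ μ {ω | B K ω - B 0 ω ≤ -((c : ℝ) + 1)}ᶜ := measure_mono fun ω hω h => (hω K).not_ge h
    _ = _ := by rw [prob_compl_eq_one_sub (measurableSet_le hmeas measurable_const), hfall]

lemma IsBrownianMotion.measure_bddBelow_lt_one [IsProbabilityMeasure μ]
    (hB : IsBrownianMotion μ x₀ B) : μ {ω | BddBelow (range fun k : ℕ => B k ω)} < 1 := by
  have hmono : Monotone fun c : ℕ => {ω | ∀ k : ℕ, -((c : ℝ) + 1) < B k ω - B 0 ω} :=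
    fun a b hab ω hω k => by
      have : (a : ℝ) ≤ b := Nat.cast_le.2 hab
      linarith [hω k]
  calc _ ≤ μ (⋃ c : ℕ, {ω | ∀ k : ℕ, -((c : ℝ) + 1) < B k ω - B 0 ω}) := by
        refine measure_mono fun ω ⟨b, hb⟩ => ?_
        obtain ⟨c, hc⟩ := exists_nat_gt (B 0 ω - b)
        exact mem_iUnion.2 ⟨c, fun k => by linarith [hb ⟨k, rfl⟩]⟩
    _ = ⨆ c : ℕ, μ {ω | ∀ k : ℕ, -((c : ℝ) + 1) < B k ω - B 0 ω} := hmono.measure_iUnion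
    _ ≤ 1 - gaussianReal 0 1 (Iic (-1)) := iSup_le hB.measure_forall_gt_le
    _ < 1 := ENNReal.sub_lt_self ENNReal.one_ne_top one_ne_zero gaussianReal_Iic_neg_one_ne_zero

lemma IsBrownianMotion.ae_frequently_le [IsProbabilityMeasure μ] (hB : IsBrownianMotion μ x₀ B) :
    ∀ᵐ ω ∂μ, ∀ c, ∃ᶠ u in atTop, B u ω ≤ c := by
  have hbdd : μ {ω | BddBelow (range fun k : ℕ => B k ω)} = 0 :=
    hB.measure_bddBelow_eq_zero_or_one.resolve_right hB.measure_bddBelow_lt_one.ne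
  filter_upwards [measure_eq_zero_iff_ae_notMem.1 hbdd] with ω hω c hev
  refine hω (isBoundedUnder_of_eventually_ge (a := c) ?_).bddBelow_range
  exact (tendsto_natCast_atTop_atTop.eventually hev).mono fun k hk => (not_le.1 hk).le

end BrownianMotion

theorem pathwise_equality_general
    {Ω : Type} [m0 : MeasurableSpace Ω] (μ : Measure Ω) [IsProbabilityMeasure μ]
    (x₀ : ℝ) (n : ℕ) (hn : 1 ≤ n)
    (t : ℕ → ℝ)
    (ξ : ℕ → ℝ → ℝ)
    (hξmono : ∀ i ∈ Finset.Icc 1 n, Monotone (ξ i))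
    (hξrc : ∀ i ∈ Finset.Icc 1 n, ∀ x : ℝ, ContinuousWithinAt (ξ i) (Set.Ici x) x)
    (X : ℝ → Ω → ℝ) (hX : IsIterAYEmbedding μ x₀ t n ξ X)
    (m : ℝ) (hm : x₀ < m) (hξn : ξ n m < m) :
    ∀ᵐ ω ∂μ,
      (if m ≤ runMax (fun s => X s ω) (t n) then (1 : ℝ) else 0)
        = Ups (fun s => X s ω) t n m
            (fun i => sInf ((fun j => ξ j m) '' Set.Icc i n)) := by
  obtain ⟨-, -, B, hB, hembed⟩ := hX
  have hmatch : ∀ᵐ ω ∂μ, ∀ i ≤ n, X (t i) ω = B (iterTau (fun s => B s ω) ξ i) ω ∧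
      runMax (fun s => X s ω) (t i) = runMax (fun s => B s ω) (iterTau (fun s => B s ω) ξ i) :=
    ae_all_iff.2 fun i => eventually_imp_distrib_left.2 (hembed i)
  filter_upwards [hmatch, hB.ae_frequently_le] with ω hω hlow
  rw [Ups_congr (fun i hi => (hω i hi).1) (fun i hi => (hω i hi).2), (hω n le_rfl).2]
  exact indicator_eq_Ups_iterTau hn (hB.cont ω) hlow hξmono hξrc (by rwa [hB.init]) hξn
    (by simp) fun i hi => sInf_image_Icc_eq_min _ (Finset.mem_Ico.1 hi).2

/-- **Pathwise equality** (Lemma 4.1 of Henry-Labordère–Obłój–Spoida–Touzi): if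
`ξ = (ξ₁,…,ξₙ)` are nondecreasing right-continuous boundaries and `X` is an iterated
Azéma–Yor type embedding based on `ξ`, then for every `m > X₀` with `ξₙ(m) < m`,
almost surely `1{X̄_{tₙ} ≥ m} = Υₙ(X, m, ζ(m))`, where `ζᵢ(m) = min_{j ≥ i} ξⱼ(m)`. -/
theorem pathwise_equality
    {Ω : Type} [m0 : MeasurableSpace Ω] (μ : Measure Ω) [IsProbabilityMeasure μ]
    (x₀ : ℝ) (n : ℕ) (hn : 1 ≤ n)
    (t : ℕ → ℝ) (ht0 : t 0 = 0) (htmono : ∀ i < n, t i ≤ t (i + 1))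
    (ξ : ℕ → ℝ → ℝ)
    (hξmono : ∀ i ∈ Finset.Icc 1 n, Monotone (ξ i))
    (hξrc : ∀ i ∈ Finset.Icc 1 n, ∀ x : ℝ, ContinuousWithinAt (ξ i) (Set.Ici x) x)
    (X : ℝ → Ω → ℝ) (hX : IsIterAYEmbedding μ x₀ t n ξ X)
    (m : ℝ) (hm : x₀ < m) (hξn : ξ n m < m) :
    ∀ᵐ ω ∂μ,
      (if m ≤ runMax (fun s => X s ω) (t n) then (1 : ℝ) else 0)
        = Ups (fun s => X s ω) t n m
            (fun i => sInf ((fun j => ξ j m) '' Set.Icc i n)) :=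
  pathwise_equality_general (m0 := m0) μ x₀ n hn t ξ hξmono hξrc X hX m hm hξn
end
end

section
/- Let p > 1 and let X = (X_t)_{t≤T} be a nonnegative càdlàg submartingale with deterministic initial value X_0 = X₀ ≥ 0 a.s. Then, with values in [0, ∞], E[X̄_T^p] ≤ X₀^p + ∫_{X₀}^{∞} p m^{p−1} · E[(X_T − ((p−1)/p)·m)⁺] / (m − ((p−1)/p)·m) dm ≤ (p/(p−1))^p · E[X_T^p] − (p/(p−1))·X₀^p. -/
open MeasureTheory ProbabilityTheory Set Filter
open scoped ENNReal NNReal Classical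

noncomputable section

/-!
Write `ζ(m) = (p - 1) m / p`. On the dyadic grids of `[0, T]` the finite maxima `Mₙ` of the
path increase, and by right continuity their limit dominates the running maximum, so by monotone
convergence it suffices to bound `E[Mₙ ^ p]`. The layer-cake formula `E[M ^ p] = ∫₀^∞ p t^(p-1) P(M > t) dt`, with
`P(M > t) ≤ 1` for `t ≤ x₀` and Doob's maximal inequality for the discrete submartingale
`(X - ζ(t))⁺` for `t > x₀`, gives the first inequality.

For the second, `(p/(p-1))^p x^p = ∫₀^∞ p² m^(p-2) (x - ζ(m))⁺ dm` for `x ≥ 0`, and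
`p² m^(p-2) = p m^(p-1) / (m - ζ(m))`. Taking expectations (Tonelli), the part `m > x₀` is the
integral in the middle term, while on `(0, x₀]` Jensen and `E[X_T] ≥ x₀` bound
`E[(X_T - ζ(m))⁺]` below by `x₀ - ζ(m)`, whose integral is `x₀^p + p/(p-1) x₀^p`.
-/

section Calculus

variable {p : ℝ}

lemma integrableOn_Ioc_zero_rpow {r : ℝ} (hr : -1 < r) {b : ℝ} (hb : 0 ≤ b) :
    IntegrableOn (fun m : ℝ => m ^ r) (Ioc 0 b) :=
  (intervalIntegrable_iff_integrableOn_Ioc_of_le hb).mp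
    (intervalIntegral.intervalIntegrable_rpow' hr)

lemma setIntegral_Ioc_zero_rpow {r : ℝ} (hr : -1 < r) {b : ℝ} (hb : 0 ≤ b) :
    ∫ m in Ioc 0 b, m ^ r = b ^ (r + 1) / (r + 1) := by
  rw [← intervalIntegral.integral_of_le hb, integral_rpow (Or.inl hr),
    Real.zero_rpow (by linarith), sub_zero]

lemma sub_div_mul_self_eq (hp : p ≠ 0) (m : ℝ) : m - (p - 1) / p * m = m / p := by
  field_simp
  ring

lemma mul_rpow_div_sub_linear_eq (hp : 0 < p) {m : ℝ} (hm : 0 < m) :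
    p * m ^ (p - 1) / (m - (p - 1) / p * m) = p ^ 2 * m ^ (p - 2) := by
  rw [sub_div_mul_self_eq hp.ne', show p - 1 = p - 2 + 1 by ring, Real.rpow_add_one hm.ne']
  field_simp

lemma setLIntegral_Ioc_zero_rpow_mul_ofReal_sub (hp : 1 < p) {x b : ℝ} (hb : 0 ≤ b)
    (hxb : (p - 1) / p * b ≤ x) :
    ∫⁻ m in Ioc 0 b, ENNReal.ofReal (p ^ 2 * m ^ (p - 2)) * ENNReal.ofReal (x - (p - 1) / p * m)
      = ENNReal.ofReal (p ^ 2 / (p - 1) * x * b ^ (p - 1) - (p - 1) * b ^ p) := by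
  have hp0 : p ≠ 0 := by positivity
  set g : ℝ → ℝ := fun m => p ^ 2 * x * m ^ (p - 2) - p * (p - 1) * m ^ (p - 1)
  have hg : ∀ m ∈ Ioc (0 : ℝ) b, p ^ 2 * m ^ (p - 2) * (x - (p - 1) / p * m) = g m := by
    intro m hm
    have hm1 : m ^ (p - 1) = m ^ (p - 2) * m := by
      rw [← Real.rpow_add_one hm.1.ne', sub_add]; norm_num
    simp only [g, hm1]
    field_simp
  have hg_nonneg : ∀ m ∈ Ioc (0 : ℝ) b, 0 ≤ g m := by
    intro m hm
    rw [← hg m hm]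
    have : (p - 1) / p * m ≤ (p - 1) / p * b :=
      mul_le_mul_of_nonneg_left hm.2 (div_nonneg (by linarith) (by linarith))
    exact mul_nonneg (by have := hm.1; positivity) (by linarith)
  have hint2 := (integrableOn_Ioc_zero_rpow (show (-1 : ℝ) < p - 2 by linarith) hb).const_mul
    (p ^ 2 * x)
  have hint1 := (integrableOn_Ioc_zero_rpow (show (-1 : ℝ) < p - 1 by linarith) hb).const_mul
    (p * (p - 1))
  calc ∫⁻ m in Ioc 0 b,
        ENNReal.ofReal (p ^ 2 * m ^ (p - 2)) * ENNReal.ofReal (x - (p - 1) / p * m)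
      = ∫⁻ m in Ioc 0 b, ENNReal.ofReal (g m) := by
        refine setLIntegral_congr_fun measurableSet_Ioc fun m hm => ?_
        rw [← ENNReal.ofReal_mul (by have := hm.1; positivity), hg m hm]
    _ = ENNReal.ofReal (∫ m in Ioc 0 b, g m) :=
        (ofReal_integral_eq_lintegral_ofReal (hint2.sub hint1)
          ((ae_restrict_mem measurableSet_Ioc).mono hg_nonneg)).symm
    _ = _ := by
        rw [integral_sub hint2 hint1, integral_const_mul, integral_const_mul,
          setIntegral_Ioc_zero_rpow (by linarith) hb, setIntegral_Ioc_zero_rpow (by linarith) hb,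
          show p - 2 + 1 = p - 1 by ring, show p - 1 + 1 = p by ring]
        congr 1
        field_simp

lemma setLIntegral_Ioi_zero_rpow_mul_ofReal_sub (hp : 1 < p) {x : ℝ} (hx : 0 ≤ x) :
    ∫⁻ m in Ioi 0, ENNReal.ofReal (p ^ 2 * m ^ (p - 2)) * ENNReal.ofReal (x - (p - 1) / p * m)
      = ENNReal.ofReal ((p / (p - 1)) ^ p * x ^ p) := by
  have hp1 : 0 < p - 1 := by linarith
  set b := p / (p - 1) * x
  have hb : 0 ≤ b := by positivity
  have hxb : (p - 1) / p * b = x := by simp only [b]; field_simp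
  have htail : ∀ m ∈ Ioi b,
      ENNReal.ofReal (p ^ 2 * m ^ (p - 2)) * ENNReal.ofReal (x - (p - 1) / p * m) = 0 := by
    intro m hm
    have : (p - 1) / p * b ≤ (p - 1) / p * m :=
      mul_le_mul_of_nonneg_left (le_of_lt hm) (by positivity)
    rw [ENNReal.ofReal_of_nonpos (show x - (p - 1) / p * m ≤ 0 by linarith), mul_zero]
  rw [← Ioc_union_Ioi_eq_Ioi hb, lintegral_union measurableSet_Ioi (Ioc_disjoint_Ioi le_rfl),
    setLIntegral_congr_fun measurableSet_Ioi htail, lintegral_zero, add_zero,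
    setLIntegral_Ioc_zero_rpow_mul_ofReal_sub hp hb hxb.le, ← Real.mul_rpow (by positivity) hx]
  change _ = ENNReal.ofReal (b ^ p)
  congr 1
  rw [← hxb, show b ^ p = b ^ (p - 1) * b by
    rw [← Real.rpow_add_one' hb (by linarith), sub_add_cancel]]
  field_simp
  ring

lemma setLIntegral_Ioc_zero_rpow_mul_ofReal_sub_self (hp : 1 < p) {x : ℝ} (hx : 0 ≤ x) :
    ∫⁻ m in Ioc 0 x, ENNReal.ofReal (p ^ 2 * m ^ (p - 2)) * ENNReal.ofReal (x - (p - 1) / p * m)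
      = ENNReal.ofReal (x ^ p + p / (p - 1) * x ^ p) := by
  have hp1 : 0 < p - 1 := by linarith
  have hle : (p - 1) / p * x ≤ x := by
    have := sub_div_mul_self_eq (p := p) (by linarith) x
    have : 0 ≤ x / p := div_nonneg hx (by linarith)
    linarith
  rw [setLIntegral_Ioc_zero_rpow_mul_ofReal_sub hp hx hle, show x ^ p = x ^ (p - 1) * x by
    rw [← Real.rpow_add_one' hx (by linarith), sub_add_cancel]]
  congr 1
  field_simp
  ring

end Calculus

open scoped Topology

section Dyadic

def dyadicMax (f : ℝ → ℝ) (T : ℝ) (n : ℕ) : ℝ :=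
  (Finset.range (2 ^ n + 1)).sup' Finset.nonempty_range_add_one fun k => f (k * T / 2 ^ n)

variable {f : ℝ → ℝ} {T : ℝ}

lemma le_dyadicMax {n k : ℕ} (hk : k ≤ 2 ^ n) : f (k * T / 2 ^ n) ≤ dyadicMax f T n :=
  Finset.le_sup' (fun k : ℕ => f (k * T / 2 ^ n)) (Finset.mem_range_succ_iff.2 hk)

lemma dyadicMax_nonneg (hf0 : ∀ t, 0 ≤ f t) (n : ℕ) : 0 ≤ dyadicMax f T n :=
  (hf0 _).trans (le_dyadicMax (Nat.zero_le _))

lemma dyadicMax_mono : Monotone (dyadicMax f T) := by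
  refine monotone_nat_of_le_succ fun n => Finset.sup'_le _ _ fun k hk => ?_
  have hk' : 2 * k ≤ 2 ^ (n + 1) := by
    have := Finset.mem_range_succ_iff.1 hk; rw [pow_succ]; omega
  have hgrid : (k : ℝ) * T / 2 ^ n = ((2 * k : ℕ) : ℝ) * T / 2 ^ (n + 1) := by
    push_cast; ring
  exact hgrid ▸ le_dyadicMax hk'

lemma le_of_forall_dyadicMax_le (hf : ∀ t, ContinuousWithinAt f (Ici t) t) {a : ℝ}
    (ha : ∀ n, dyadicMax f T n ≤ a) {s : ℝ} (hs : s ∈ Icc 0 T) : f s ≤ a := by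
  rcases hs.2.eq_or_lt with rfl | hsT
  · simpa using (le_dyadicMax (f := f) (T := s) (n := 0) (k := 1) le_rfl).trans (ha 0)
  have hT : 0 < T := hs.1.trans_lt hsT
  -- `s` is approached from the right by the grid points `⌈s 2^n / T⌉ T / 2^n`.
  set k : ℕ → ℕ := fun n => ⌈s * 2 ^ n / T⌉₊
  have hk : ∀ n, k n ≤ 2 ^ n := fun n => Nat.ceil_le.2 <| by
    rw [div_le_iff₀ hT]; push_cast; nlinarith [pow_pos (two_pos (α := ℝ)) n]
  have hlow : ∀ n, s ≤ k n * T / 2 ^ n := fun n => by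
    have := Nat.le_ceil (s * 2 ^ n / T)
    rw [le_div_iff₀ (by positivity)]
    rwa [div_le_iff₀ hT] at this
  have hup : ∀ n, k n * T / 2 ^ n ≤ s + T * (1 / 2) ^ n := fun n => by
    have hceil : (k n : ℝ) ≤ s * 2 ^ n / T + 1 :=
      (Nat.ceil_lt_add_one (div_nonneg (mul_nonneg hs.1 (by positivity)) hT.le)).le
    calc (k n : ℝ) * T / 2 ^ n ≤ (s * 2 ^ n / T + 1) * T / 2 ^ n := by gcongr
      _ = s + T * (1 / 2) ^ n := by rw [one_div_pow]; field_simp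
  have hlim : Tendsto (fun n => (k n : ℝ) * T / 2 ^ n) atTop (𝓝[≥] s) := by
    have hgap : Tendsto (fun n : ℕ => s + T * (1 / 2) ^ n) atTop (𝓝 s) := by
      simpa using tendsto_const_nhds.add
        ((tendsto_pow_atTop_nhds_zero_of_lt_one (r := (1 / 2 : ℝ)) (by norm_num)
          (by norm_num)).const_mul T)
    exact tendsto_nhdsWithin_iff.2 ⟨tendsto_of_tendsto_of_tendsto_of_le_of_le tendsto_const_nhds
      hgap hlow hup, Eventually.of_forall hlow⟩
  exact le_of_tendsto ((hf s).tendsto.comp hlim)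
    (Eventually.of_forall fun n => (le_dyadicMax (hk n)).trans (ha n))

lemma ofReal_runMax_rpow_le_iSup (hf : ∀ t, ContinuousWithinAt f (Ici t) t)
    (hf0 : ∀ t, 0 ≤ f t) {p : ℝ} (hp : 0 < p) :
    ENNReal.ofReal (runMax f T ^ p) ≤ ⨆ n, ENNReal.ofReal (dyadicMax f T n ^ p) := by
  set S := ⨆ n, ENNReal.ofReal (dyadicMax f T n ^ p)
  by_cases hS : S = ⊤
  · simp [hS]
  have hM0 := dyadicMax_nonneg (T := T) hf0
  set a := S.toReal ^ p⁻¹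
  have hMa : ∀ n, dyadicMax f T n ≤ a := fun n => by
    have hle : dyadicMax f T n ^ p ≤ S.toReal := (ENNReal.ofReal_le_iff_le_toReal hS).1
      (le_iSup (fun n => ENNReal.ofReal (dyadicMax f T n ^ p)) n)
    calc dyadicMax f T n = (dyadicMax f T n ^ p) ^ p⁻¹ :=
          (Real.rpow_rpow_inv (hM0 n) hp.ne').symm
      _ ≤ a := Real.rpow_le_rpow (by have := hM0 n; positivity) hle (by positivity)
  have hrun : runMax f T ≤ a := Real.sSup_le
    (by rintro _ ⟨s, hs, rfl⟩; exact le_of_forall_dyadicMax_le hf hMa hs) (by positivity)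
  calc ENNReal.ofReal (runMax f T ^ p) ≤ ENNReal.ofReal (a ^ p) :=
        ENNReal.ofReal_le_ofReal (Real.rpow_le_rpow
          (Real.sSup_nonneg (by rintro _ ⟨s, -, rfl⟩; exact hf0 s)) hrun hp.le)
    _ = S := by rw [Real.rpow_inv_rpow ENNReal.toReal_nonneg hp.ne', ENNReal.ofReal_toReal hS]

end Dyadic

namespace MeasureTheory

variable {Ω : Type*} {m0 : MeasurableSpace Ω} {μ : Measure Ω}

lemma measurable_dyadicMax {X : ℝ → Ω → ℝ} (hX : ∀ t, Measurable (X t)) (T : ℝ) (n : ℕ) :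
    Measurable fun ω => dyadicMax (fun s => X s ω) T n :=
  Finset.measurable_range_sup'' fun _ _ => hX _

def Filtration.comp {ι κ : Type*} [Preorder ι] [Preorder κ] (ℱ : Filtration ι m0)
    {τ : κ → ι} (hτ : Monotone τ) : Filtration κ m0 :=
  ⟨fun k => ℱ (τ k), fun _ _ h => ℱ.mono (hτ h), fun _ => ℱ.le _⟩

lemma Submartingale.comp_monotone {ι κ : Type*} [Preorder ι] [Preorder κ]
    {ℱ : Filtration ι m0} {X : ι → Ω → ℝ} (hX : Submartingale X ℱ μ) {τ : κ → ι}
    (hτ : Monotone τ) : Submartingale (fun k => X (τ k)) (ℱ.comp hτ) μ :=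
  ⟨fun k => hX.stronglyAdapted (τ k), fun _ _ h => hX.2.1 _ _ (hτ h),
    fun _ => hX.integrable _⟩

lemma Submartingale.ofReal_sub_mul_measure_lt_sup'_le [IsFiniteMeasure μ]
    {𝒢 : Filtration ℕ m0} {f : ℕ → Ω → ℝ} (hf : Submartingale f 𝒢 μ) {c t : ℝ} (hct : c < t)
    (N : ℕ) :
    ENNReal.ofReal (t - c) *
        μ {ω | t < (Finset.range (N + 1)).sup' Finset.nonempty_range_add_one fun k => f k ω}
      ≤ ∫⁻ ω, ENNReal.ofReal (f N ω - c) ∂μ := by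
  set g : ℕ → Ω → ℝ := fun k ω => max (f k ω - c) 0
  have hg : Submartingale g 𝒢 μ := (hf.sub_martingale (martingale_const 𝒢 μ c)).pos
  have hg0 : 0 ≤ g := fun k ω => le_max_right _ _
  set ε := (t - c).toNNReal
  have hε : (ε : ℝ) = t - c := Real.coe_toNNReal _ (sub_pos.2 hct).le
  set B :=
    {ω | (ε : ℝ) ≤ (Finset.range (N + 1)).sup' Finset.nonempty_range_add_one fun k => g k ω}
  have hsub : {ω | t < (Finset.range (N + 1)).sup' Finset.nonempty_range_add_one fun k => f k ω}
      ⊆ B := fun ω hω => by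
    obtain ⟨k, hk, hlt⟩ := (Finset.lt_sup'_iff _).1 hω.out
    exact Finset.le_sup'_of_le (fun k => g k ω) hk (le_max_of_le_left (by linarith))
  calc ENNReal.ofReal (t - c) * μ _ ≤ ε * μ B := mul_le_mul_right (measure_mono hsub) _
    _ ≤ ENNReal.ofReal (∫ ω in B, g N ω ∂μ) := maximal_ineq hg hg0 N
    _ ≤ ENNReal.ofReal (∫ ω, g N ω ∂μ) :=
        ENNReal.ofReal_le_ofReal
          (setIntegral_le_integral (hg.integrable N) (ae_of_all _ (hg0 N)))
    _ = ∫⁻ ω, ENNReal.ofReal (g N ω) ∂μ :=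
        ofReal_integral_eq_lintegral_ofReal (hg.integrable N) (ae_of_all _ (hg0 N))
    _ = ∫⁻ ω, ENNReal.ofReal (f N ω - c) ∂μ := by
        simp only [g, ENNReal.ofReal_max, ENNReal.ofReal_zero, max_eq_left zero_le]

lemma Submartingale.ofReal_sub_mul_measure_lt_dyadicMax_le [IsFiniteMeasure μ]
    {ℱ : Filtration ℝ m0} {X : ℝ → Ω → ℝ} (hX : Submartingale X ℱ μ) {T : ℝ} (hT : 0 ≤ T)
    {c t : ℝ} (hct : c < t) (n : ℕ) :
    ENNReal.ofReal (t - c) * μ {ω | t < dyadicMax (fun s => X s ω) T n}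
      ≤ ∫⁻ ω, ENNReal.ofReal (X T ω - c) ∂μ := by
  have hτ : Monotone fun k : ℕ => (k : ℝ) * T / 2 ^ n := fun i j h => by
    dsimp only; gcongr
  have h := (hX.comp_monotone hτ).ofReal_sub_mul_measure_lt_sup'_le hct (2 ^ n)
  have hN : ((2 ^ n : ℕ) : ℝ) * T / 2 ^ n = T := by push_cast; field_simp
  simp only [hN] at h
  exact h

lemma Submartingale.ofReal_le_lintegral_ofReal [IsProbabilityMeasure μ]
    {ℱ : Filtration ℝ m0} {X : ℝ → Ω → ℝ} (hX : Submartingale X ℱ μ) {T : ℝ} (hT : 0 ≤ T)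
    (hXT : ∀ ω, 0 ≤ X T ω) {x₀ : ℝ} (hinit : ∀ᵐ ω ∂μ, X 0 ω = x₀) :
    ENNReal.ofReal x₀ ≤ ∫⁻ ω, ENNReal.ofReal (X T ω) ∂μ :=
  calc ENNReal.ofReal x₀ = ENNReal.ofReal (∫ ω, X 0 ω ∂μ) := by
        rw [integral_congr_ae hinit]; simp
    _ ≤ ENNReal.ofReal (∫ ω, X T ω ∂μ) :=
        ENNReal.ofReal_le_ofReal (by simpa using hX.setIntegral_le hT MeasurableSet.univ)
    _ = ∫⁻ ω, ENNReal.ofReal (X T ω) ∂μ :=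
        ofReal_integral_eq_lintegral_ofReal (hX.integrable T) (ae_of_all _ hXT)

end MeasureTheory

section Integrals

variable {Ω : Type*} [MeasurableSpace Ω] {μ : Measure Ω} {p : ℝ}

lemma lintegral_rpow_le_of_mul_measure_lt_le [IsProbabilityMeasure μ] {Y : Ω → ℝ}
    (hY0 : ∀ ω, 0 ≤ Y ω) (hY : Measurable Y) (hp : 0 < p) {x₀ : ℝ} (hx₀ : 0 ≤ x₀)
    {d : ℝ → ℝ} {G : ℝ → ℝ≥0∞} (hd : ∀ t, x₀ < t → 0 < d t)
    (hG : ∀ t, x₀ < t → ENNReal.ofReal (d t) * μ {ω | t < Y ω} ≤ G t) :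
    ∫⁻ ω, ENNReal.ofReal (Y ω ^ p) ∂μ
      ≤ ENNReal.ofReal (x₀ ^ p)
          + ∫⁻ t in Ioi x₀, ENNReal.ofReal (p * t ^ (p - 1) / d t) * G t := by
  rw [lintegral_rpow_eq_lintegral_meas_lt_mul μ (ae_of_all _ hY0) hY.aemeasurable hp,
    ← Ioc_union_Ioi_eq_Ioi hx₀, lintegral_union measurableSet_Ioi (Ioc_disjoint_Ioi le_rfl),
    mul_add]
  gcongr ?_ + ?_
  · have hint := integrableOn_Ioc_zero_rpow (show (-1 : ℝ) < p - 1 by linarith) hx₀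
    calc ENNReal.ofReal p * ∫⁻ t in Ioc 0 x₀, μ {ω | t < Y ω} * ENNReal.ofReal (t ^ (p - 1))
        ≤ ENNReal.ofReal p * ∫⁻ t in Ioc 0 x₀, ENNReal.ofReal (t ^ (p - 1)) := by
          gcongr with t
          exact mul_le_of_le_one_left zero_le prob_le_one
      _ = ENNReal.ofReal (x₀ ^ p) := by
          rw [← ofReal_integral_eq_lintegral_ofReal hint
            ((ae_restrict_mem measurableSet_Ioc).mono fun t ht => Real.rpow_nonneg ht.1.le _),
            setIntegral_Ioc_zero_rpow (by linarith) hx₀, sub_add_cancel,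
            ← ENNReal.ofReal_mul hp.le]
          congr 1
          field_simp
  · rw [← lintegral_const_mul' _ _ ENNReal.ofReal_ne_top]
    refine lintegral_mono_ae ((ae_restrict_mem measurableSet_Ioi).mono fun t ht => ?_)
    have hdt := hd t ht
    calc ENNReal.ofReal p * (μ {ω | t < Y ω} * ENNReal.ofReal (t ^ (p - 1)))
        = ENNReal.ofReal (p * t ^ (p - 1)) / ENNReal.ofReal (d t)
            * (ENNReal.ofReal (d t) * μ {ω | t < Y ω}) := by
          rw [← mul_assoc _ (ENNReal.ofReal (d t)), ENNReal.div_mul_cancel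
            (ENNReal.ofReal_pos.2 hdt).ne' ENNReal.ofReal_ne_top, ENNReal.ofReal_mul hp.le]
          ring
      _ ≤ ENNReal.ofReal (p * t ^ (p - 1) / d t) * G t := by
          rw [ENNReal.ofReal_div_of_pos hdt]
          gcongr
          exact hG t ht

lemma ofReal_sub_le_lintegral_ofReal_sub [IsProbabilityMeasure μ] {Y : Ω → ℝ} {x c : ℝ}
    (hc : 0 ≤ c) (hx : ENNReal.ofReal x ≤ ∫⁻ ω, ENNReal.ofReal (Y ω) ∂μ) :
    ENNReal.ofReal (x - c) ≤ ∫⁻ ω, ENNReal.ofReal (Y ω - c) ∂μ := by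
  rw [ENNReal.ofReal_sub _ hc, tsub_le_iff_right]
  calc ENNReal.ofReal x ≤ ∫⁻ ω, ENNReal.ofReal (Y ω) ∂μ := hx
    _ ≤ ∫⁻ ω, (ENNReal.ofReal (Y ω - c) + ENNReal.ofReal c) ∂μ :=
        lintegral_mono fun ω => by
          simpa only [sub_add_cancel] using ENNReal.ofReal_add_le (p := Y ω - c) (q := c)
    _ = ∫⁻ ω, ENNReal.ofReal (Y ω - c) ∂μ + ENNReal.ofReal c := by
        rw [lintegral_add_right _ measurable_const, lintegral_const, measure_univ, mul_one]

lemma ofReal_mul_lintegral_rpow_eq [SFinite μ] {Y : Ω → ℝ} (hY0 : ∀ ω, 0 ≤ Y ω)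
    (hY : Measurable Y) (hp : 1 < p) :
    ENNReal.ofReal ((p / (p - 1)) ^ p) * ∫⁻ ω, ENNReal.ofReal (Y ω ^ p) ∂μ
      = ∫⁻ m in Ioi 0, ENNReal.ofReal (p ^ 2 * m ^ (p - 2))
          * ∫⁻ ω, ENNReal.ofReal (Y ω - (p - 1) / p * m) ∂μ := by
  have hC : 0 ≤ (p / (p - 1)) ^ p := Real.rpow_nonneg (div_nonneg (by linarith) (by linarith)) _
  calc ENNReal.ofReal ((p / (p - 1)) ^ p) * ∫⁻ ω, ENNReal.ofReal (Y ω ^ p) ∂μ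
      = ∫⁻ ω, (∫⁻ m in Ioi 0, ENNReal.ofReal (p ^ 2 * m ^ (p - 2))
          * ENNReal.ofReal (Y ω - (p - 1) / p * m)) ∂μ := by
        rw [← lintegral_const_mul' _ _ ENNReal.ofReal_ne_top]
        refine lintegral_congr fun ω => ?_
        rw [← ENNReal.ofReal_mul hC, setLIntegral_Ioi_zero_rpow_mul_ofReal_sub hp (hY0 ω)]
    _ = ∫⁻ m in Ioi 0, ∫⁻ ω, ENNReal.ofReal (p ^ 2 * m ^ (p - 2))
          * ENNReal.ofReal (Y ω - (p - 1) / p * m) ∂μ :=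
        lintegral_lintegral_swap (Measurable.aemeasurable (by fun_prop))
    _ = _ := lintegral_congr fun m => lintegral_const_mul' _ _ ENNReal.ofReal_ne_top

lemma ofReal_rpow_add_setLIntegral_Ioi_le_sub [IsProbabilityMeasure μ] {Y : Ω → ℝ}
    (hY0 : ∀ ω, 0 ≤ Y ω) (hY : Measurable Y) (hp : 1 < p) {x₀ : ℝ} (hx₀ : 0 ≤ x₀)
    (hmean : ENNReal.ofReal x₀ ≤ ∫⁻ ω, ENNReal.ofReal (Y ω) ∂μ) :
    ENNReal.ofReal (x₀ ^ p)
        + ∫⁻ m in Ioi x₀, ENNReal.ofReal (p * m ^ (p - 1) / (m - (p - 1) / p * m))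
            * ∫⁻ ω, ENNReal.ofReal (Y ω - (p - 1) / p * m) ∂μ
      ≤ ENNReal.ofReal ((p / (p - 1)) ^ p) * ∫⁻ ω, ENNReal.ofReal (Y ω ^ p) ∂μ
          - ENNReal.ofReal (p / (p - 1) * x₀ ^ p) := by
  set I : ℝ → ℝ≥0∞ := fun m => ∫⁻ ω, ENNReal.ofReal (Y ω - (p - 1) / p * m) ∂μ
  have hx₀p : 0 ≤ x₀ ^ p := Real.rpow_nonneg hx₀ _
  have hcoef : ∫⁻ m in Ioi x₀, ENNReal.ofReal (p * m ^ (p - 1) / (m - (p - 1) / p * m)) * I m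
      = ∫⁻ m in Ioi x₀, ENNReal.ofReal (p ^ 2 * m ^ (p - 2)) * I m :=
    setLIntegral_congr_fun measurableSet_Ioi fun m hm => by
      rw [mul_rpow_div_sub_linear_eq (by linarith) (hx₀.trans_lt hm)]
  have hlow : ENNReal.ofReal (x₀ ^ p) + ENNReal.ofReal (p / (p - 1) * x₀ ^ p)
      ≤ ∫⁻ m in Ioc 0 x₀, ENNReal.ofReal (p ^ 2 * m ^ (p - 2)) * I m := by
    rw [← ENNReal.ofReal_add hx₀p (mul_nonneg (div_nonneg (by linarith) (by linarith)) hx₀p),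
      ← setLIntegral_Ioc_zero_rpow_mul_ofReal_sub_self hp hx₀]
    refine setLIntegral_mono' measurableSet_Ioc fun m hm => ?_
    gcongr
    exact ofReal_sub_le_lintegral_ofReal_sub
      (mul_nonneg (div_nonneg (by linarith) (by linarith)) hm.1.le) hmean
  refine ENNReal.le_sub_of_add_le_right ENNReal.ofReal_ne_top ?_
  rw [ofReal_mul_lintegral_rpow_eq hY0 hY hp, ← Ioc_union_Ioi_eq_Ioi hx₀,
    lintegral_union measurableSet_Ioi (Ioc_disjoint_Ioi le_rfl), hcoef, add_right_comm]
  gcongr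

end Integrals

/-- **Doob's `L^p` inequalities, `p > 1`** (Proposition 3.1 (i)): for a nonnegative
càdlàg submartingale `X` with `X_0 = X₀` a.s., with values in `[0,∞]`,
`E[X̄_T^p] ≤ X₀^p + ∫_{X₀}^∞ p m^{p-1} E[(X_T - ((p-1)/p) m)⁺] / (m - ((p-1)/p) m) dm
≤ (p/(p-1))^p E[X_T^p] - (p/(p-1)) X₀^p`. -/
theorem doob_Lp_inequality
    {Ω : Type} [m0 : MeasurableSpace Ω] (μ : Measure Ω) [IsProbabilityMeasure μ]
    (p : ℝ) (hp : 1 < p) (T : ℝ) (hT : 0 ≤ T) (x₀ : ℝ) (hx₀ : 0 ≤ x₀)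
    (ℱ : Filtration ℝ m0) (X : ℝ → Ω → ℝ)
    (hX : Submartingale X ℱ μ)
    (hcadlag : ∀ ω, IsCadlag fun s => X s ω)
    (hnonneg : ∀ s ω, 0 ≤ X s ω)
    (hinit : ∀ᵐ ω ∂μ, X 0 ω = x₀) :
    (∫⁻ ω, ENNReal.ofReal ((runMax (fun s => X s ω) T) ^ p) ∂μ)
      ≤ ENNReal.ofReal (x₀ ^ p)
          + ∫⁻ m in Set.Ioi x₀,
              ENNReal.ofReal (p * m ^ (p - 1) / (m - ((p - 1) / p) * m))
                * ∫⁻ ω, ENNReal.ofReal (X T ω - ((p - 1) / p) * m) ∂μ ∧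
    ENNReal.ofReal (x₀ ^ p)
        + (∫⁻ m in Set.Ioi x₀,
            ENNReal.ofReal (p * m ^ (p - 1) / (m - ((p - 1) / p) * m))
              * ∫⁻ ω, ENNReal.ofReal (X T ω - ((p - 1) / p) * m) ∂μ)
      ≤ ENNReal.ofReal ((p / (p - 1)) ^ p)
            * (∫⁻ ω, ENNReal.ofReal ((X T ω) ^ p) ∂μ)
          - ENNReal.ofReal ((p / (p - 1)) * x₀ ^ p) := by
  have hp0 : 0 < p := by linarith
  have hXm : ∀ t, Measurable (X t) := fun t =>
    ((hX.stronglyAdapted t).mono (ℱ.le t)).measurable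
  have hgap : ∀ t, x₀ < t → 0 < t - (p - 1) / p * t := fun t ht => by
    have := hx₀.trans_lt ht
    rw [sub_div_mul_self_eq hp0.ne']
    positivity
  refine ⟨?_, ofReal_rpow_add_setLIntegral_Ioi_le_sub (hnonneg T) (hXm T) hp hx₀
    (hX.ofReal_le_lintegral_ofReal hT (hnonneg T) hinit)⟩
  calc ∫⁻ ω, ENNReal.ofReal (runMax (fun s => X s ω) T ^ p) ∂μ
      ≤ ∫⁻ ω, ⨆ n, ENNReal.ofReal (dyadicMax (fun s => X s ω) T n ^ p) ∂μ :=
        lintegral_mono fun ω => ofReal_runMax_rpow_le_iSup (hcadlag ω).1 (hnonneg · ω) hp0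
    _ = ⨆ n, ∫⁻ ω, ENNReal.ofReal (dyadicMax (fun s => X s ω) T n ^ p) ∂μ :=
        lintegral_iSup (fun n => ((measurable_dyadicMax hXm T n).pow_const p).ennreal_ofReal)
          fun i j hij ω => ENNReal.ofReal_le_ofReal <| Real.rpow_le_rpow
            (dyadicMax_nonneg (hnonneg · ω) i) (dyadicMax_mono hij) hp0.le
    _ ≤ _ := iSup_le fun n => lintegral_rpow_le_of_mul_measure_lt_le
        (fun ω => dyadicMax_nonneg (hnonneg · ω) n) (measurable_dyadicMax hXm T n) hp0 hx₀ hgap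
        fun t ht => hX.ofReal_sub_mul_measure_lt_dyadicMax_le hT (sub_pos.1 (hgap t ht)) n
end
end

section
/- Let X = (X_t)_{t≤T} be a nonnegative càdlàg submartingale with deterministic initial value X_0 = X₀ > 0 a.s. and E[X_T log X_T] < ∞. Then there is a unique α̂ ∈ (0,1] satisfying α̂·(1 + E[(X_T/X₀)·log(X_T/X₀)]) = E[X_T/X₀]·(1 + α̂·log α̂), and E[X̄_T] ≤ E[X_T]/α̂ = ( E[X_T log X_T] + X₀ − E[X_T]·log X₀ ) / (1 + α̂·log α̂). -/
open MeasureTheory ProbabilityTheory Set Filter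
open scoped ENNReal NNReal Classical

noncomputable section

open scoped Topology

/-!
Doob's weak-type inequality `t · P(X̄_T ≥ t) ≤ E[X_T; X̄_T ≥ t]`, integrated against `dt / t` over
`t > x₀` (layer cake and Tonelli), gives `E[X̄_T ∨ x₀] ≤ x₀ + E[X_T log ((X̄_T ∨ x₀) / x₀)]`.
Young's inequality `x log y ≤ x log x + y / β + x (log β - 1)` lets the running maximum on the right
be absorbed into the left, so that for every `β > 1`
`E[X̄_T] ≤ (x₀ + E[X_T log X_T] - E[X_T] log x₀ + E[X_T] (log β - 1)) β / (β - 1)`,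
and `β = 1 / α̂` turns the right-hand side into `E[X_T] / α̂`. By right-continuity, `X̄_T` is the
increasing limit of maxima over finite sets of rational times, where the discrete maximal
inequality applies.
-/

theorem Real.mul_log_le_mul_log_add_div {z y β : ℝ} (hz : 0 ≤ z) (hy : 0 < y) (hβ : 0 < β) :
    z * Real.log y ≤ z * Real.log z + y / β + z * (Real.log β - 1) := by
  rcases hz.eq_or_lt with rfl | hz
  · simp only [zero_mul, zero_add, add_zero]; positivity
  have key := Real.log_le_sub_one_of_pos (show 0 < y / (β * z) by positivity)
  rw [Real.log_div hy.ne' (by positivity), Real.log_mul hβ.ne' hz.ne'] at key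
  have hyz : z * (y / (β * z)) = y / β := by field_simp
  nlinarith [mul_le_mul_of_nonneg_left key hz.le]

theorem Real.div_mul_log_div (x : ℝ) {c : ℝ} (hc : c ≠ 0) :
    x / c * Real.log (x / c) = (x * Real.log x - x * Real.log c) / c := by
  rcases eq_or_ne x 0 with rfl | hx
  · simp
  · rw [Real.log_div hx hc]; ring

theorem runMax_le_of_dense {f : ℝ → ℝ} (hf : ∀ t, ContinuousWithinAt f (Ici t) t) {S : Set ℝ}
    (hS : Dense S) {T y : ℝ} (hT : 0 ≤ T) (hle : ∀ t ∈ S ∩ Icc 0 T, f t ≤ y) (hfT : f T ≤ y) :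
    runMax f T ≤ y := by
  refine csSup_le ((nonempty_Icc.2 hT).image f) ?_
  rintro _ ⟨t, ht, rfl⟩
  rcases ht.2.eq_or_lt with rfl | htT
  · exact hfT
  have hcl : t ∈ closure (Ioo t T ∩ S) :=
    closure_minimal (hS.open_subset_closure_inter isOpen_Ioo) isClosed_closure
      (by rw [closure_Ioo htT.ne]; exact ⟨le_rfl, htT.le⟩)
  exact ((hf t).mono fun s hs => hs.1.1.le).closure_le hcl continuousWithinAt_const
    fun s hs => hle s ⟨hs.2, ht.1.trans hs.1.1.le, hs.1.2.le⟩

theorem ofReal_runMax_le_of_dense {f : ℝ → ℝ} (hf : ∀ t, ContinuousWithinAt f (Ici t) t)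
    {S : Set ℝ} (hS : Dense S) {T : ℝ} (hT : 0 ≤ T) {V : ℝ≥0∞}
    (hle : ∀ t ∈ S ∩ Icc 0 T, ENNReal.ofReal (f t) ≤ V) (hfT : ENNReal.ofReal (f T) ≤ V) :
    ENNReal.ofReal (runMax f T) ≤ V := by
  rcases eq_or_ne V ⊤ with rfl | hV
  · exact le_top
  simp only [ENNReal.ofReal_le_iff_le_toReal hV] at hle hfT ⊢
  exact runMax_le_of_dense hf hS hT hle hfT

theorem Set.Countable.exists_monotone_finset_isGreatest {α : Type*} [LinearOrder α] {S : Set α}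
    (hS : S.Countable) {T : α} (hST : S ⊆ Iic T) :
    ∃ F : ℕ → Finset α, Monotone F ∧ (∀ n, IsGreatest (F n : Set α) T) ∧
      ∀ t ∈ S, ∃ n, t ∈ F n := by
  obtain ⟨e, he⟩ := (hS.insert T).exists_eq_range (insert_nonempty T S)
  refine ⟨fun n => insert T ((Finset.range n).image e), fun n m h => Finset.insert_subset_insert _
    (Finset.image_subset_image (Finset.range_subset_range.2 h)),
    fun n => ⟨Finset.mem_insert_self _ _, fun t ht => ?_⟩, fun t ht => ?_⟩
  · simp only [Finset.coe_insert, Finset.coe_image, mem_insert_iff, mem_image] at ht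
    obtain rfl | ⟨i, -, rfl⟩ := ht
    · exact le_rfl
    · obtain h | h := (he ▸ mem_range_self i : e i ∈ insert T S)
      exacts [h.le, hST h]
  · obtain ⟨i, rfl⟩ : t ∈ range e := he ▸ mem_insert_of_mem T ht
    exact ⟨i + 1, Finset.mem_insert_of_mem
      (Finset.mem_image_of_mem e (Finset.mem_range.2 i.lt_succ_self))⟩

theorem Finset.measurable_sup'' {ι α δ : Type*} [MeasurableSpace α] [SemilatticeSup α]
    [MeasurableSup₂ α] [MeasurableSpace δ] {s : Finset ι} (hs : s.Nonempty) {f : ι → δ → α}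
    (hf : ∀ n ∈ s, Measurable (f n)) : Measurable fun x => s.sup' hs fun n => f n x := by
  simpa only [← Finset.sup'_apply] using Finset.measurable_sup' hs hf

namespace MeasureTheory

variable {Ω ι κ : Type*} {m0 : MeasurableSpace Ω} {μ : Measure Ω}

theorem lintegral_Ioc_inv {a b : ℝ} (ha : 0 < a) (hab : a ≤ b) :
    ∫⁻ t in Ioc a b, ENNReal.ofReal t⁻¹ = ENNReal.ofReal (Real.log (b / a)) := by
  have hzero : (0 : ℝ) ∉ uIcc a b := by
    rw [uIcc_of_le hab]; exact fun h => (ha.trans_le h.1).false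
  rw [← ofReal_integral_eq_lintegral_ofReal
      (intervalIntegral.intervalIntegrable_inv (fun x hx h => hzero (h ▸ hx))
        continuousOn_id).1
      ((ae_restrict_iff' measurableSet_Ioc).2 (ae_of_all _ fun t ht => by
        have := ha.trans ht.1; positivity)),
    ← intervalIntegral.integral_of_le hab, integral_inv hzero]

def Filtration.timeChange [Preorder ι] [Preorder κ] (ℱ : Filtration ι m0) {τ : κ → ι}
    (hτ : Monotone τ) : Filtration κ m0 where
  seq k := ℱ (τ k)
  mono' _ _ h := ℱ.mono (hτ h)
  le' _ := ℱ.le _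

theorem Submartingale.timeChange [Preorder ι] [Preorder κ] {ℱ : Filtration ι m0}
    {X : ι → Ω → ℝ} (hX : Submartingale X ℱ μ) {τ : κ → ι} (hτ : Monotone τ) :
    Submartingale (fun k => X (τ k)) (ℱ.timeChange hτ) μ :=
  ⟨fun k => hX.stronglyAdapted (τ k), fun _ _ h => hX.2.1 _ _ (hτ h), fun _ => hX.integrable _⟩

theorem Submartingale.mul_measure_le_setLIntegral_finsetSup [LinearOrder ι] [IsFiniteMeasure μ]
    {ℱ : Filtration ι m0} {X : ι → Ω → ℝ} (hX : Submartingale X ℱ μ) (hnonneg : 0 ≤ X)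
    {F : Finset ι} {T : ι} (hT : IsGreatest (F : Set ι) T) {t : ℝ} (ht : 0 ≤ t) :
    ENNReal.ofReal t * μ {ω | t ≤ F.sup' ⟨T, hT.1⟩ fun s => X s ω} ≤
      ∫⁻ ω in {ω | t ≤ F.sup' ⟨T, hT.1⟩ fun s => X s ω}, ENNReal.ofReal (X T ω) ∂μ := by
  set N := F.card
  have hN : 0 < N := Finset.card_pos.2 ⟨T, hT.1⟩
  let τ : ℕ → ι := fun k => F.orderEmbOfFin rfl ⟨min k (N - 1), by omega⟩
  have hτ : Monotone τ := fun i j h =>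
    (F.orderEmbOfFin rfl).monotone (Fin.mk_le_mk.2 (min_le_min_right _ h))
  have hτN : τ (N - 1) = T := by
    simp only [τ, min_self]
    rw [Finset.orderEmbOfFin_last rfl hN]
    exact (F.isGreatest_max' _).unique hT
  have himage : (Finset.range N).image τ = F := by
    ext s
    simp only [Finset.mem_image, Finset.mem_range]
    refine ⟨fun ⟨k, _, hk⟩ => hk ▸ F.orderEmbOfFin_mem rfl _, fun hs => ?_⟩
    obtain ⟨⟨k, hk⟩, rfl⟩ : s ∈ Set.range (F.orderEmbOfFin rfl) := by simpa using hs
    exact ⟨k, hk, congrArg _ (Fin.ext (min_eq_left (by omega)))⟩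
  have hsup : ∀ ω, ((Finset.range (N - 1 + 1)).sup' Finset.nonempty_range_add_one
      fun k => X (τ k) ω) = F.sup' ⟨T, hT.1⟩ fun s => X s ω := by
    intro ω
    simp_rw [Nat.sub_add_cancel hN, ← himage, Finset.sup'_image]
    rfl
  have key := maximal_ineq (hX.timeChange hτ) (fun k => hnonneg (τ k)) (ε := t.toNNReal) (N - 1)
  simp only [hsup, Real.coe_toNNReal t ht, hτN] at key
  rw [ofReal_integral_eq_lintegral_ofReal (hX.integrable T).integrableOn
    (ae_of_all _ (hnonneg T))] at key
  simpa [ENNReal.smul_def, ENNReal.ofReal] using key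

theorem lintegral_le_add_lintegral_mul_log_of_weakType [SFinite μ] {Y Z : Ω → ℝ} {x₀ : ℝ}
    (hx₀ : 0 < x₀) (hY : Measurable Y) (hZ : Measurable Z) (hYx₀ : ∀ ω, x₀ ≤ Y ω)
    (hweak : ∀ t, x₀ < t → ENNReal.ofReal t * μ {ω | t ≤ Y ω} ≤
      ∫⁻ ω in {ω | t ≤ Y ω}, ENNReal.ofReal (Z ω) ∂μ) :
    ∫⁻ ω, ENNReal.ofReal (Y ω) ∂μ ≤
      ENNReal.ofReal x₀ * μ univ + ∫⁻ ω, ENNReal.ofReal (Z ω * Real.log (Y ω / x₀)) ∂μ := by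
  set S : Set (ℝ × Ω) := {p | p.1 ≤ Y p.2}
  let f : ℝ × Ω → ℝ≥0∞ := S.indicator fun p => ENNReal.ofReal p.1⁻¹ * ENNReal.ofReal (Z p.2)
  have hf : Measurable f :=
    ((measurable_fst.inv.ennreal_ofReal).mul (hZ.comp measurable_snd).ennreal_ofReal).indicator
      (measurableSet_le measurable_fst (hY.comp measurable_snd))
  have hslice_t : ∀ t, x₀ < t → μ {ω | t < Y ω} ≤ ∫⁻ ω, f (t, ω) ∂μ := by
    intro t ht
    have ht0 : 0 < t := hx₀.trans ht
    calc μ {ω | t < Y ω} ≤ μ {ω | t ≤ Y ω} := measure_mono fun ω (h : t < Y ω) => h.le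
      _ = ENNReal.ofReal t⁻¹ * (ENNReal.ofReal t * μ {ω | t ≤ Y ω}) := by
        rw [← mul_assoc, ← ENNReal.ofReal_mul (by positivity), inv_mul_cancel₀ ht0.ne',
          ENNReal.ofReal_one, one_mul]
      _ ≤ ENNReal.ofReal t⁻¹ * ∫⁻ ω in {ω | t ≤ Y ω}, ENNReal.ofReal (Z ω) ∂μ := by
        gcongr; exact hweak t ht
      _ = ∫⁻ ω, f (t, ω) ∂μ := by
        rw [← lintegral_const_mul' _ _ ENNReal.ofReal_ne_top,
          ← lintegral_indicator (measurableSet_le measurable_const hY)]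
        rfl
  have hslice_ω : ∀ ω, ∫⁻ t in Ioi x₀, f (t, ω) = ENNReal.ofReal (Z ω * Real.log (Y ω / x₀)) := by
    intro ω
    calc ∫⁻ t in Ioi x₀, f (t, ω)
        = ∫⁻ t in Ioi x₀,
            (Iic (Y ω)).indicator (fun t => ENNReal.ofReal t⁻¹ * ENNReal.ofReal (Z ω)) t := rfl
      _ = ∫⁻ t in Ioc x₀ (Y ω), ENNReal.ofReal t⁻¹ * ENNReal.ofReal (Z ω) := by
        rw [lintegral_indicator measurableSet_Iic, Measure.restrict_restrict measurableSet_Iic,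
          Iic_inter_Ioi]
      _ = _ := by
        rw [lintegral_mul_const' _ _ ENNReal.ofReal_ne_top, lintegral_Ioc_inv hx₀ (hYx₀ ω),
          mul_comm,
          ← ENNReal.ofReal_mul' (Real.log_nonneg ((one_le_div hx₀).2 (hYx₀ ω)))]
  rw [lintegral_eq_lintegral_meas_lt μ (ae_of_all _ fun ω => hx₀.le.trans (hYx₀ ω))
      hY.aemeasurable, ← Ioc_union_Ioi_eq_Ioi hx₀.le,
    lintegral_union measurableSet_Ioi (Ioc_disjoint_Ioi le_rfl)]
  gcongr ?_ + ?_
  · calc ∫⁻ t in Ioc 0 x₀, μ {ω | t < Y ω} ≤ ∫⁻ _ in Ioc 0 x₀, μ univ :=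
          lintegral_mono fun t => measure_mono (subset_univ _)
      _ = ENNReal.ofReal x₀ * μ univ := by
        rw [setLIntegral_const, Real.volume_Ioc, sub_zero, mul_comm]
  · calc ∫⁻ t in Ioi x₀, μ {ω | t < Y ω} ≤ ∫⁻ t in Ioi x₀, ∫⁻ ω, f (t, ω) ∂μ :=
          setLIntegral_mono' measurableSet_Ioi hslice_t
      _ = ∫⁻ ω, (∫⁻ t in Ioi x₀, f (t, ω)) ∂μ := lintegral_lintegral_swap hf.aemeasurable
      _ = _ := lintegral_congr hslice_ω

theorem integral_le_of_weakType [IsProbabilityMeasure μ] {Y Z : Ω → ℝ} {x₀ : ℝ} (hx₀ : 0 < x₀)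
    (hY : Measurable Y) (hYint : Integrable Y μ) (hZ : Measurable Z) (hZint : Integrable Z μ)
    (hZ0 : 0 ≤ Z) (hZlog : Integrable (fun ω => Z ω * Real.log (Z ω)) μ)
    (hYx₀ : ∀ ω, x₀ ≤ Y ω)
    (hweak : ∀ t, x₀ < t → ENNReal.ofReal t * μ {ω | t ≤ Y ω} ≤
      ∫⁻ ω in {ω | t ≤ Y ω}, ENNReal.ofReal (Z ω) ∂μ) {β : ℝ} (hβ : 1 < β) :
    ∫ ω, Y ω ∂μ ≤ (x₀ + ∫ ω, Z ω * Real.log (Z ω) ∂μ - (∫ ω, Z ω ∂μ) * Real.log x₀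
      + (∫ ω, Z ω ∂μ) * (Real.log β - 1)) * (β / (β - 1)) := by
  have hβ0 : 0 < β := by linarith
  set W : Ω → ℝ := fun ω => Z ω * Real.log (Y ω / x₀)
  have hW0 : ∀ ω, 0 ≤ W ω := fun ω =>
    mul_nonneg (hZ0 ω) (Real.log_nonneg ((one_le_div hx₀).2 (hYx₀ ω)))
  have hYoung : ∀ ω, W ω ≤ Z ω * Real.log (Z ω) + Y ω / β
      + Z ω * (Real.log β - 1) - Z ω * Real.log x₀ := fun ω => by
    have := Real.mul_log_le_mul_log_add_div (hZ0 ω) (hx₀.trans_le (hYx₀ ω)) hβ0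
    simp only [W, Real.log_div (hx₀.trans_le (hYx₀ ω)).ne' hx₀.ne', mul_sub]
    linarith
  have hHint : Integrable (fun ω => Z ω * Real.log (Z ω) + Y ω / β
      + Z ω * (Real.log β - 1) - Z ω * Real.log x₀) μ :=
    ((hZlog.add (hYint.div_const β)).add (hZint.mul_const _)).sub (hZint.mul_const _)
  have hWint : Integrable W μ :=
    hHint.mono' (hZ.mul (hY.div_const x₀).log).aestronglyMeasurable
      (ae_of_all _ fun ω => by rw [Real.norm_of_nonneg (hW0 ω)]; exact hYoung ω)
  have hlayer : ∫ ω, Y ω ∂μ ≤ x₀ + ∫ ω, W ω ∂μ := by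
    have hWpos : 0 ≤ ∫ ω, W ω ∂μ := integral_nonneg hW0
    have := lintegral_le_add_lintegral_mul_log_of_weakType hx₀ hY hZ hYx₀ hweak
    rw [measure_univ, mul_one, ← ofReal_integral_eq_lintegral_ofReal hYint
        (ae_of_all _ fun ω => hx₀.le.trans (hYx₀ ω)),
      ← ofReal_integral_eq_lintegral_ofReal hWint (ae_of_all _ hW0),
      ← ENNReal.ofReal_add hx₀.le hWpos] at this
    exact (ENNReal.ofReal_le_ofReal_iff (by positivity)).1 this
  have hYoungInt := integral_mono hWint hHint hYoung
  rw [integral_sub (by fun_prop) (hZint.mul_const _),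
    integral_add (by fun_prop) (hZint.mul_const _),
    integral_add hZlog (hYint.div_const β), integral_div, integral_mul_const,
    integral_mul_const] at hYoungInt
  rw [mul_div_assoc', le_div_iff₀ (by linarith)]
  have : (∫ ω, Y ω ∂μ) / β * β = ∫ ω, Y ω ∂μ := div_mul_cancel₀ _ hβ0.ne'
  nlinarith

theorem Submartingale.lintegral_max_finsetSup_le [LinearOrder ι] [IsProbabilityMeasure μ]
    {ℱ : Filtration ι m0} {X : ι → Ω → ℝ} (hX : Submartingale X ℱ μ) (hnonneg : 0 ≤ X)
    {F : Finset ι} {T : ι} (hT : IsGreatest (F : Set ι) T) {x₀ : ℝ} (hx₀ : 0 < x₀)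
    (hint : Integrable (fun ω => X T ω * Real.log (X T ω)) μ) {β : ℝ} (hβ : 1 < β) :
    ∫⁻ ω, ENNReal.ofReal (max (F.sup' ⟨T, hT.1⟩ fun s => X s ω) x₀) ∂μ ≤
      ENNReal.ofReal ((x₀ + ∫ ω, X T ω * Real.log (X T ω) ∂μ - (∫ ω, X T ω ∂μ) * Real.log x₀
        + (∫ ω, X T ω ∂μ) * (Real.log β - 1)) * (β / (β - 1))) := by
  have hF : F.Nonempty := ⟨T, hT.1⟩
  set Y : Ω → ℝ := fun ω => max (F.sup' hF fun s => X s ω) x₀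
  have hmeas : ∀ s, Measurable (X s) := fun s => ((hX.stronglyAdapted s).mono (ℱ.le s)).measurable
  have hYmeas : Measurable Y := (Finset.measurable_sup'' hF fun s _ => hmeas s).max measurable_const
  have hYint : Integrable Y μ := by
    have hYeq : Y = F.sup' hF X ⊔ fun _ => x₀ := by
      ext ω; simp [Y, Finset.sup'_apply]
    exact hYeq ▸ (Finset.sup'_induction (p := (Integrable · μ)) hF X
      (fun _ hf _ hg => hf.sup hg) fun s _ => hX.integrable s).sup (integrable_const x₀)
  have hweak : ∀ t, x₀ < t → ENNReal.ofReal t * μ {ω | t ≤ Y ω} ≤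
      ∫⁻ ω in {ω | t ≤ Y ω}, ENNReal.ofReal (X T ω) ∂μ := by
    intro t ht
    have hset : {ω | t ≤ Y ω} = {ω | t ≤ F.sup' hF fun s => X s ω} := by
      ext ω; simp [Y, ht.not_ge]
    rw [hset]
    exact hX.mul_measure_le_setLIntegral_finsetSup hnonneg hT (hx₀.trans ht).le
  rw [← ofReal_integral_eq_lintegral_ofReal hYint
    (ae_of_all _ fun ω => hx₀.le.trans (le_max_right _ _))]
  exact ENNReal.ofReal_le_ofReal (integral_le_of_weakType hx₀ hYmeas hYint (hmeas T)
    (hX.integrable T) (hnonneg T) hint (fun ω => le_max_right _ _) hweak hβ)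

theorem Submartingale.lintegral_runMax_le [IsProbabilityMeasure μ] {ℱ : Filtration ℝ m0}
    {X : ℝ → Ω → ℝ} (hX : Submartingale X ℱ μ) (hnonneg : 0 ≤ X)
    (hright : ∀ ω t, ContinuousWithinAt (fun s => X s ω) (Ici t) t) {T x₀ : ℝ} (hT : 0 ≤ T)
    (hx₀ : 0 < x₀) (hint : Integrable (fun ω => X T ω * Real.log (X T ω)) μ) {β : ℝ}
    (hβ : 1 < β) :
    ∫⁻ ω, ENNReal.ofReal (runMax (fun s => X s ω) T) ∂μ ≤
      ENNReal.ofReal ((x₀ + ∫ ω, X T ω * Real.log (X T ω) ∂μ - (∫ ω, X T ω ∂μ) * Real.log x₀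
        + (∫ ω, X T ω ∂μ) * (Real.log β - 1)) * (β / (β - 1))) := by
  obtain ⟨F, hFmono, hFT, hFS⟩ :=
    ((countable_range ((↑) : ℚ → ℝ)).mono inter_subset_left).exists_monotone_finset_isGreatest
      (T := T) fun t (ht : t ∈ range _ ∩ Icc 0 T) => ht.2.2
  set Y : ℕ → Ω → ℝ := fun n ω => max ((F n).sup' ⟨T, (hFT n).1⟩ fun s => X s ω) x₀
  have hYmono : ∀ ω, Monotone fun n => Y n ω := fun ω n m hnm =>
    max_le_max_right _ (Finset.sup'_mono _ (hFmono hnm) _)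
  have hYmeas : ∀ n, Measurable (Y n) := fun n =>
    (Finset.measurable_sup'' _ fun s _ =>
      ((hX.stronglyAdapted s).mono (ℱ.le s)).measurable).max measurable_const
  have hXY : ∀ ω n, ∀ t ∈ F n, ENNReal.ofReal (X t ω) ≤ ⨆ n, ENNReal.ofReal (Y n ω) :=
    fun ω n t ht => (ENNReal.ofReal_le_ofReal ((Finset.le_sup' (fun s => X s ω) ht).trans
      (le_max_left _ _))).trans (le_iSup (fun n => ENNReal.ofReal (Y n ω)) n)
  calc ∫⁻ ω, ENNReal.ofReal (runMax (fun s => X s ω) T) ∂μ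
      ≤ ∫⁻ ω, ⨆ n, ENNReal.ofReal (Y n ω) ∂μ := lintegral_mono fun ω =>
        ofReal_runMax_le_of_dense (hright ω) Rat.denseRange_cast hT
          (fun t ht => (hFS t ht).elim fun n hn => hXY ω n t hn) (hXY ω 0 T (hFT 0).1)
    _ = ⨆ n, ∫⁻ ω, ENNReal.ofReal (Y n ω) ∂μ :=
      lintegral_iSup (fun n => (hYmeas n).ennreal_ofReal)
        fun n m hnm ω => ENNReal.ofReal_le_ofReal (hYmono ω hnm)
    _ ≤ _ := iSup_le fun n => hX.lintegral_max_finsetSup_le hnonneg (hFT n) hx₀ hint hβ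

end MeasureTheory

theorem integral_sub_le_integral_mul_log_sub {Ω : Type*} [MeasurableSpace Ω] {μ : Measure Ω}
    [IsProbabilityMeasure μ] {f : Ω → ℝ} (hf : Integrable f μ)
    (hflog : Integrable (fun ω => f ω * Real.log (f ω)) μ) (hf0 : 0 ≤ f) {c : ℝ} (hc : 0 < c) :
    ∫ ω, f ω ∂μ - c ≤ ∫ ω, f ω * Real.log (f ω) ∂μ - (∫ ω, f ω ∂μ) * Real.log c := by
  have hpt : ∀ ω, f ω - c ≤ f ω * Real.log (f ω) - f ω * Real.log c := fun ω => by
    have := Real.self_sub_one_le_mul_log (div_nonneg (hf0 ω) hc.le)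
    rwa [Real.div_mul_log_div _ hc.ne', div_sub_one hc.ne', div_le_div_iff_of_pos_right hc]
      at this
  simpa [integral_sub hf (integrable_const c), integral_sub hflog (hf.mul_const _),
    integral_mul_const] using integral_mono (hf.sub (integrable_const c))
      (hflog.sub (hf.mul_const _)) hpt

theorem existsUnique_mem_Ioc_mul_one_add_eq {a b : ℝ} (ha : 0 < a) (hab : a ≤ 1 + b) :
    ∃! α : ℝ, α ∈ Ioc (0 : ℝ) 1 ∧ α * (1 + b) = a * (1 + α * Real.log α) := by
  set φ : ℝ → ℝ := fun α => α * (1 + b) - a * (1 + α * Real.log α)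
  have hφc : Continuous φ := by fun_prop
  have hφmono : StrictMonoOn φ (Icc 0 1) := by
    refine strictMonoOn_of_deriv_pos (convex_Icc 0 1) hφc.continuousOn fun x hx => ?_
    rw [interior_Icc] at hx
    have hd : HasDerivAt φ (1 * (1 + b) - a * (Real.log x + 1)) x :=
      ((hasDerivAt_id' x).mul_const (1 + b)).sub
        (((Real.hasDerivAt_mul_log hx.1.ne').const_add 1).const_mul a)
    rw [hd.deriv]
    nlinarith [Real.log_neg hx.1 hx.2]
  obtain ⟨α, hα, hφα⟩ : ∃ α ∈ Icc (0 : ℝ) 1, φ α = 0 :=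
    intermediate_value_Icc zero_le_one hφc.continuousOn
      ⟨by simp only [φ]; simp; linarith, by simp only [φ]; simp; linarith⟩
  have hα0 : α ≠ 0 := by
    rintro rfl
    simp [φ] at hφα
    linarith
  refine ⟨α, ⟨⟨hα.1.lt_of_ne' hα0, hα.2⟩, sub_eq_zero.1 hφα⟩, fun α' ⟨hα', heq⟩ =>
    hφmono.injOn ⟨hα'.1.le, hα'.2⟩ hα ?_⟩
  rw [hφα]
  exact sub_eq_zero.2 heq

theorem le_ofReal_div_of_forall_one_lt {L : ℝ≥0∞} {c E α : ℝ} (hE : 0 ≤ E)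
    (hα : α ∈ Ioc (0 : ℝ) 1) (hc : α * c = E * (1 + α * Real.log α))
    (h : ∀ β, 1 < β → L ≤ ENNReal.ofReal ((c + E * (Real.log β - 1)) * (β / (β - 1)))) :
    L ≤ ENNReal.ofReal (E / α) := by
  obtain ⟨hα0, hα1⟩ := hα
  rcases hα1.lt_or_eq with hlt | rfl
  · convert h α⁻¹ ((one_lt_inv₀ hα0).2 hlt) using 2
    have h1α : 1 - α ≠ 0 := (sub_pos.2 hlt).ne'
    rw [Real.log_inv]
    field_simp
    linear_combination -hc
  · -- the optimal `β = 1 / α` degenerates; instead `log β ≤ β - 1` bounds the estimate by `E β`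
    have hcE : c = E := by simpa using hc
    refine ge_of_tendsto (f := fun β => ENNReal.ofReal (E * β)) (x := 𝓝[>] 1) ?_ ?_
    · exact ((ENNReal.continuous_ofReal.comp (continuous_const.mul continuous_id)).tendsto'
        1 _ (by simp)).mono_left nhdsWithin_le_nhds
    · filter_upwards [self_mem_nhdsWithin] with β (hβ : 1 < β)
      refine (h β hβ).trans (ENNReal.ofReal_le_ofReal ?_)
      rw [hcE, mul_div_assoc', div_le_iff₀ (by linarith)]
      nlinarith [mul_le_mul_of_nonneg_left (Real.log_le_sub_one_of_pos (by linarith : 0 < β))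
        (mul_nonneg hE (by linarith : (0 : ℝ) ≤ β))]

/-- **Improved Doob `L¹` inequality** (Corollary 3.5): for a nonnegative càdlàg
submartingale `X` with `X_0 = X₀ > 0` a.s. and `E[X_T log X_T] < ∞` (encoded as
integrability of `X_T log X_T`; its negative part is bounded), there is a unique
`α̂ ∈ (0,1]` with `α̂ (1 + E[(X_T/X₀) log(X_T/X₀)]) = E[X_T/X₀] (1 + α̂ log α̂)`, and
`E[X̄_T] ≤ E[X_T]/α̂ = (E[X_T log X_T] + X₀ - E[X_T] log X₀)/(1 + α̂ log α̂)`. -/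
theorem improved_doob_L1_inequality
    {Ω : Type} [m0 : MeasurableSpace Ω] (μ : Measure Ω) [IsProbabilityMeasure μ]
    (T : ℝ) (hT : 0 ≤ T) (x₀ : ℝ) (hx₀ : 0 < x₀)
    (ℱ : Filtration ℝ m0) (X : ℝ → Ω → ℝ)
    (hX : Submartingale X ℱ μ)
    (hcadlag : ∀ ω, IsCadlag fun s => X s ω)
    (hnonneg : ∀ s ω, 0 ≤ X s ω)
    (hinit : ∀ᵐ ω ∂μ, X 0 ω = x₀)
    (hint : Integrable (fun ω => X T ω * Real.log (X T ω)) μ) :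
    (∃! α : ℝ, α ∈ Set.Ioc (0 : ℝ) 1 ∧
        α * (1 + ∫ ω, (X T ω / x₀) * Real.log (X T ω / x₀) ∂μ)
          = (∫ ω, X T ω / x₀ ∂μ) * (1 + α * Real.log α)) ∧
    (∀ α : ℝ, α ∈ Set.Ioc (0 : ℝ) 1 →
      (α * (1 + ∫ ω, (X T ω / x₀) * Real.log (X T ω / x₀) ∂μ)
          = (∫ ω, X T ω / x₀ ∂μ) * (1 + α * Real.log α)) →
      ((∫⁻ ω, ENNReal.ofReal (runMax (fun s => X s ω) T) ∂μ)
          ≤ ENNReal.ofReal ((∫ ω, X T ω ∂μ) / α) ∧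
        (∫ ω, X T ω ∂μ) / α
          = ((∫ ω, X T ω * Real.log (X T ω) ∂μ) + x₀
              - (∫ ω, X T ω ∂μ) * Real.log x₀) / (1 + α * Real.log α))) := by
  have hXT := hX.integrable T
  simp_rw [Real.div_mul_log_div _ hx₀.ne']
  rw [integral_div, integral_div, integral_sub hint (hXT.mul_const _), integral_mul_const]
  set E := ∫ ω, X T ω ∂μ
  set I := ∫ ω, X T ω * Real.log (X T ω) ∂μ
  have hx₀E : x₀ ≤ E := by
    simpa [integral_congr_ae hinit] using hX.setIntegral_le hT MeasurableSet.univ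
  have hEI := integral_sub_le_integral_mul_log_sub hXT hint (hnonneg T) hx₀
  refine ⟨existsUnique_mem_Ioc_mul_one_add_eq (div_pos (hx₀.trans_le hx₀E) hx₀) ?_,
    fun α hα heq => ?_⟩
  · rw [← sub_le_iff_le_add', div_sub_one hx₀.ne', div_le_div_iff_of_pos_right hx₀]
    exact hEI
  have hc : α * (x₀ + I - E * Real.log x₀) = E * (1 + α * Real.log α) := by
    field_simp at heq
    linear_combination heq
  have h1α : 0 < 1 + α * Real.log α := by
    linarith [Real.self_sub_one_le_mul_log hα.1.le, hα.1]
  refine ⟨le_ofReal_div_of_forall_one_lt (hx₀.le.trans hx₀E) hα hc fun β hβ =>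
    hX.lintegral_runMax_le hnonneg (fun ω => (hcadlag ω).1) hT hx₀ hint hβ, ?_⟩
  rw [div_eq_div_iff hα.1.ne' h1α.ne']
  linear_combination -hc
end
end
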